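/- arXiv:2004.11429 — 7 statements merged into one kernel-verified Lean document; each statement's English description precedes it below -/
import Mathlib

section
/- Let P_R and P_B be doubly stochastic symmetric matrices on the same finite vertex set with P_B an involution (P_B² = I), and let T = ½P_R + ½P_R P_B. Then the operator norm of T² restricted to the space orthogonal to the uniform distribution satisfies ‖T²‖₊ ≤ ½ + ½‖P_R P_B P_R‖₊. -/
open scoped Classical BigOperators

/-- `‖M‖₊` : the operator norm (w.r.t. the Euclidean norm) of `M` restricted to the
subspace of vectors orthogonal to the uniform distribution, i.e. with coordinate sum 0. -/
noncomputable def normPlus {V : Type*} [Fintype V] [DecidableEq V] (M : Matrix V V ℝ) : ℝ :=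
  sSup {r : ℝ | ∃ x : EuclideanSpace ℝ V, (∑ v, x v) = 0 ∧ ‖x‖ ≤ 1 ∧
    r = ‖Matrix.toEuclideanLin M x‖}

section Aux

variable {V : Type*} [Fintype V] [DecidableEq V]

lemma toEL_apply (M : Matrix V V ℝ) (x : EuclideanSpace ℝ V) (i : V) :
    Matrix.toEuclideanLin M x i = ∑ j, M i j * x j := by
  rw [Matrix.toEuclideanLin_apply]
  simp [Matrix.mulVec, dotProduct]

lemma toEL_mul (M N : Matrix V V ℝ) (x : EuclideanSpace ℝ V) :
    Matrix.toEuclideanLin (M * N) x =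
      Matrix.toEuclideanLin M (Matrix.toEuclideanLin N x) := by
  simp [Matrix.toEuclideanLin_apply, Matrix.mulVec_mulVec]

/-- sum of coordinates after applying a matrix with column sums 1. -/
lemma sum_toEL (M : Matrix V V ℝ) (hcol : ∀ j, ∑ i, M i j = 1)
    (x : EuclideanSpace ℝ V) (hx : (∑ v, x v) = 0) :
    (∑ v, Matrix.toEuclideanLin M x v) = 0 := by
  simp only [toEL_apply]
  rw [Finset.sum_comm]
  simp only [← Finset.sum_mul, hcol]
  simpa using hx

/-- A doubly stochastic matrix is a contraction in the Euclidean norm. -/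
lemma contraction (P : Matrix V V ℝ) (hnn : ∀ i j, 0 ≤ P i j)
    (hrow : ∀ i, ∑ j, P i j = 1) (hcol : ∀ j, ∑ i, P i j = 1)
    (x : EuclideanSpace ℝ V) : ‖Matrix.toEuclideanLin P x‖ ≤ ‖x‖ := by
  rw [EuclideanSpace.norm_eq, EuclideanSpace.norm_eq]
  apply Real.sqrt_le_sqrt
  have key : ∀ i, ‖Matrix.toEuclideanLin P x i‖ ^ 2 ≤ ∑ j, P i j * (x j) ^ 2 := by
    intro i
    rw [toEL_apply, Real.norm_eq_abs, sq_abs]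
    have cs := Finset.sum_sq_le_sum_mul_sum_of_sq_eq_mul (R := ℝ) Finset.univ
      (r := fun j => P i j * x j) (f := fun j => P i j) (g := fun j => P i j * (x j) ^ 2)
      (fun j _ => hnn i j) (fun j _ => mul_nonneg (hnn i j) (sq_nonneg _))
      (fun j _ => by ring)
    calc (∑ j, P i j * x j) ^ 2 ≤ (∑ j, P i j) * ∑ j, P i j * (x j) ^ 2 := cs
      _ = ∑ j, P i j * (x j) ^ 2 := by rw [hrow i, one_mul]
  calc ∑ i, ‖Matrix.toEuclideanLin P x i‖ ^ 2 ≤ ∑ i, ∑ j, P i j * (x j) ^ 2 :=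
        Finset.sum_le_sum fun i _ => key i
    _ = ∑ j, (∑ i, P i j) * (x j) ^ 2 := by rw [Finset.sum_comm]; simp [Finset.sum_mul]
    _ = ∑ j, ‖x j‖ ^ 2 := by simp [hcol, sq_abs]

lemma normPlus_nonneg (M : Matrix V V ℝ) : 0 ≤ normPlus M :=
  Real.sSup_nonneg (by rintro r ⟨x, -, -, rfl⟩; exact norm_nonneg _)

lemma normPlus_bddAbove (M : Matrix V V ℝ) :
    BddAbove {r : ℝ | ∃ x : EuclideanSpace ℝ V, (∑ v, x v) = 0 ∧ ‖x‖ ≤ 1 ∧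
      r = ‖Matrix.toEuclideanLin M x‖} := by
  refine ⟨‖LinearMap.toContinuousLinearMap (Matrix.toEuclideanLin M)‖, ?_⟩
  rintro r ⟨x, -, hx, rfl⟩
  calc ‖Matrix.toEuclideanLin M x‖
      = ‖LinearMap.toContinuousLinearMap (Matrix.toEuclideanLin M) x‖ := rfl
    _ ≤ ‖LinearMap.toContinuousLinearMap (Matrix.toEuclideanLin M)‖ * ‖x‖ :=
        ContinuousLinearMap.le_opNorm _ _
    _ ≤ ‖LinearMap.toContinuousLinearMap (Matrix.toEuclideanLin M)‖ * 1 := by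
        have := norm_nonneg (LinearMap.toContinuousLinearMap (Matrix.toEuclideanLin M))
        nlinarith
    _ = _ := mul_one _

lemma le_normPlus (M : Matrix V V ℝ) (x : EuclideanSpace ℝ V)
    (hs : (∑ v, x v) = 0) (hx : ‖x‖ ≤ 1) :
    ‖Matrix.toEuclideanLin M x‖ ≤ normPlus M :=
  le_csSup (normPlus_bddAbove M) ⟨x, hs, hx, rfl⟩

lemma apply_le_normPlus (M : Matrix V V ℝ) (y : EuclideanSpace ℝ V)
    (hs : (∑ v, y v) = 0) :
    ‖Matrix.toEuclideanLin M y‖ ≤ normPlus M * ‖y‖ := by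
  rcases eq_or_ne y 0 with rfl | hy
  · simp
  · have hny : 0 < ‖y‖ := norm_pos_iff.2 hy
    set x : EuclideanSpace ℝ V := ‖y‖⁻¹ • y with hxdef
    have hsx : (∑ v, x v) = 0 := by
      simp only [hxdef, PiLp.smul_apply, smul_eq_mul, ← Finset.mul_sum, hs, mul_zero]
    have hnx : ‖x‖ ≤ 1 := by
      rw [hxdef, norm_smul, norm_inv, norm_norm, inv_mul_cancel₀ hny.ne']
    have h := le_normPlus M x hsx hnx
    have hMx : Matrix.toEuclideanLin M x = ‖y‖⁻¹ • Matrix.toEuclideanLin M y := by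
      rw [hxdef, map_smul]
    rw [hMx, norm_smul, norm_inv, norm_norm] at h
    calc ‖Matrix.toEuclideanLin M y‖ = ‖y‖ * (‖y‖⁻¹ * ‖Matrix.toEuclideanLin M y‖) := by
          field_simp
      _ ≤ ‖y‖ * normPlus M := by nlinarith
      _ = normPlus M * ‖y‖ := mul_comm _ _

end Aux

/-- For doubly stochastic symmetric `P_R, P_B` with `P_B` an involution and
`T = ½P_R + ½P_R P_B`, we have `‖T²‖₊ ≤ ½ + ½‖P_R P_B P_R‖₊`. -/
theorem normPlus_T_sq {V : Type*} [Fintype V] [DecidableEq V] [Nonempty V]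
    (PR PB : Matrix V V ℝ)
    (hRsymm : PR.IsSymm) (hBsymm : PB.IsSymm)
    (hRnn : ∀ i j, 0 ≤ PR i j) (hBnn : ∀ i j, 0 ≤ PB i j)
    (hRrow : ∀ i, ∑ j, PR i j = 1) (hBrow : ∀ i, ∑ j, PB i j = 1)
    (hBinv : PB * PB = 1) :
    normPlus (((1/2 : ℝ) • PR + (1/2 : ℝ) • (PR * PB)) ^ 2) ≤
      1/2 + 1/2 * normPlus (PR * PB * PR) := by
  set N := normPlus (PR * PB * PR) with hN
  have hNnn : 0 ≤ N := normPlus_nonneg _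
  -- column sums
  have hRcol : ∀ j, ∑ i, PR i j = 1 := by
    intro j
    have : ∀ i, PR i j = PR j i := fun i => by
      conv_lhs => rw [← hRsymm]
      rfl
    simp only [this]; exact hRrow j
  have hBcol : ∀ j, ∑ i, PB i j = 1 := by
    intro j
    have : ∀ i, PB i j = PB j i := fun i => by
      conv_lhs => rw [← hBsymm]
      rfl
    simp only [this]; exact hBrow j
  -- matrix identity : T² = ¼ (PR² + PR PB PR) (1 + PB)
  have hT2 : ((1/2 : ℝ) • PR + (1/2 : ℝ) • (PR * PB)) ^ 2 =
      (1/4 : ℝ) • ((PR * PR + PR * PB * PR) * (1 + PB)) := by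
    rw [sq]
    simp only [Matrix.add_mul, Matrix.mul_add, Matrix.smul_mul, Matrix.mul_smul,
      Matrix.mul_one, smul_add, smul_smul]
    norm_num
    abel_nf
    noncomm_ring
  apply Real.sSup_le _ (by linarith)
  rintro r ⟨x, hsx, hx, rfl⟩
  rw [hT2]
  set y : EuclideanSpace ℝ V := Matrix.toEuclideanLin (1 + PB) x with hy
  have hyval : y = x + Matrix.toEuclideanLin PB x := by
    rw [hy, map_add]
    congr 1
    simp [Matrix.toEuclideanLin_apply]
  have hsy : (∑ v, y v) = 0 := by
    rw [hyval]
    have h1 := sum_toEL PB hBcol x hsx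
    simp only [PiLp.add_apply, Finset.sum_add_distrib, hsx, h1, add_zero]
  have hny : ‖y‖ ≤ 2 := by
    rw [hyval]
    calc ‖x + Matrix.toEuclideanLin PB x‖ ≤ ‖x‖ + ‖Matrix.toEuclideanLin PB x‖ :=
          norm_add_le _ _
      _ ≤ ‖x‖ + ‖x‖ := by
          have := contraction PB hBnn hBrow hBcol x
          linarith
      _ ≤ 2 := by linarith
  have key : Matrix.toEuclideanLin ((1/4 : ℝ) • ((PR * PR + PR * PB * PR) * (1 + PB))) x =
      (1/4 : ℝ) • (Matrix.toEuclideanLin (PR * PR) y + Matrix.toEuclideanLin (PR * PB * PR) y) := by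
    rw [map_smul]
    simp only [LinearMap.smul_apply]
    congr 1
    rw [toEL_mul, map_add, LinearMap.add_apply, ← hy]
  rw [key, norm_smul]
  have h1 : ‖Matrix.toEuclideanLin (PR * PR) y‖ ≤ 2 := by
    rw [toEL_mul]
    calc ‖Matrix.toEuclideanLin PR (Matrix.toEuclideanLin PR y)‖
        ≤ ‖Matrix.toEuclideanLin PR y‖ := contraction PR hRnn hRrow hRcol _
      _ ≤ ‖y‖ := contraction PR hRnn hRrow hRcol _
      _ ≤ 2 := hny
  have h2 : ‖Matrix.toEuclideanLin (PR * PB * PR) y‖ ≤ N * 2 := by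
    calc ‖Matrix.toEuclideanLin (PR * PB * PR) y‖ ≤ N * ‖y‖ := apply_le_normPlus _ y hsy
      _ ≤ N * 2 := by nlinarith
  have h3 : ‖Matrix.toEuclideanLin (PR * PR) y + Matrix.toEuclideanLin (PR * PB * PR) y‖
      ≤ 2 + N * 2 := le_trans (norm_add_le _ _) (by linarith)
  have : ‖(1/4 : ℝ)‖ = (1/4 : ℝ) := by norm_num
  rw [this]
  nlinarith [norm_nonneg (Matrix.toEuclideanLin (PR * PR) y + Matrix.toEuclideanLin (PR * PB * PR) y)]
end

section
/- In a commutative triplets structure C = CTS[S,G], every edge of C is contained in exactly two centers: if E(g,τ) denotes the edge {τ₁g, τ₂g} for τ = {τ₁,τ₂} ∈ S(1), then for every edge there are exactly two pairs (c,τ) with E(c,τ) equal to that edge, namely (g,τ) and (τ₁τ₂g, {τ₁⁻¹,τ₂⁻¹}). -/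
open scoped Classical

/-- The edges (types) `S(1)` of a 2-complex given by its set of triangles:
the 2-element subsets of triangles. -/
def edgesOf {G : Type*} [DecidableEq G] (tri : Set (Finset G)) : Set (Finset G) :=
  {e | e.card = 2 ∧ ∃ t ∈ tri, e ⊆ t}

private lemma finset_pair_eq_pair {G : Type*} [DecidableEq G] {x y c d : G}
    (h : ({x, y} : Finset G) = {c, d}) : (x = c ∧ y = d) ∨ (x = d ∧ y = c) := by
  have h' := congrArg (fun s : Finset G => (s : Set G)) h
  simp only [Finset.coe_insert, Finset.coe_singleton] at h'
  exact Set.pair_eq_pair_iff.mp h'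

/-- In a CTS `C = CTS[S,G]`, every edge of `C` is in exactly two centers: the pairs
`(c, τ)` with `E(c,τ) = E(g, {a,b})` are exactly `(g, {a,b})` and
`(a·b·g, {a⁻¹,b⁻¹})`, and these two pairs are distinct. -/
theorem cts_exactly_two_centers {G : Type*} [Group G] [DecidableEq G]
    (tri : Set (Finset G))
    (h3 : ∀ t ∈ tri, t.card = 3)
    (h0 : ∀ a b : G, ({a, b} : Finset G) ∈ edgesOf tri → b ≠ a⁻¹)
    (hB : ∀ a b : G, ({a, b} : Finset G) ∈ edgesOf tri → a * b = b * a)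
    (hC : ∀ a b : G, ({a, b} : Finset G) ∈ edgesOf tri →
      ({a⁻¹, b⁻¹} : Finset G) ∈ edgesOf tri)
    (hD : ∀ a b a' b' : G, ({a, b} : Finset G) ∈ edgesOf tri →
      ({a', b'} : Finset G) ∈ edgesOf tri → (a, b) ≠ (a', b') →
      a * b⁻¹ = a' * b'⁻¹ → b' = a⁻¹ ∧ a' = b⁻¹)
    (g : G) (a b : G) (hab : ({a, b} : Finset G) ∈ edgesOf tri) :
    {p : G × Finset G | p.2 ∈ edgesOf tri ∧
        p.2.image (fun s => s * p.1) = ({a * g, b * g} : Finset G)} =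
      ({(g, ({a, b} : Finset G)), (a * b * g, ({a⁻¹, b⁻¹} : Finset G))} :
        Set (G × Finset G)) ∧
    (g, ({a, b} : Finset G)) ≠ (a * b * g, ({a⁻¹, b⁻¹} : Finset G)) := by
  have hcomm : a * b = b * a := hB a b hab
  have hba : ({b, a} : Finset G) ∈ edgesOf tri := by rwa [Finset.pair_comm]
  constructor
  · ext ⟨c, τ⟩
    simp only [Set.mem_setOf_eq, Set.mem_insert_iff, Set.mem_singleton_iff, Prod.mk.injEq]
    constructor
    · rintro ⟨hτ, himg⟩
      obtain ⟨x, y, hxy, rfl⟩ := Finset.card_eq_two.mp hτ.1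
      rw [Finset.image_insert, Finset.image_singleton] at himg
      rcases finset_pair_eq_pair himg with ⟨h1, h2⟩ | ⟨h1, h2⟩
      · -- x*c = a*g, y*c = b*g
        have hquot : x * y⁻¹ = a * b⁻¹ := by
          have : x * y⁻¹ = (x * c) * (y * c)⁻¹ := by group
          rw [this, h1, h2]; group
        by_cases hxa : (x, y) = (a, b)
        · obtain ⟨rfl, rfl⟩ := Prod.mk.injEq .. ▸ hxa
          exact Or.inl ⟨mul_left_cancel h1, rfl⟩
        · obtain ⟨hbx, hay⟩ := hD x y a b hτ hab hxa hquot
          have hx : x = b⁻¹ := by rw [hbx, inv_inv]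
          have hy : y = a⁻¹ := by rw [hay, inv_inv]
          subst hx; subst hy
          refine Or.inr ⟨?_, Finset.pair_comm _ _⟩
          have hc : c = b * (a * g) := by rw [← h1]; group
          rw [hc, ← mul_assoc, ← hcomm]
      · -- x*c = b*g, y*c = a*g
        have hquot : x * y⁻¹ = b * a⁻¹ := by
          have : x * y⁻¹ = (x * c) * (y * c)⁻¹ := by group
          rw [this, h1, h2]; group
        by_cases hxa : (x, y) = (b, a)
        · obtain ⟨rfl, rfl⟩ := Prod.mk.injEq .. ▸ hxa
          exact Or.inl ⟨mul_left_cancel h1, Finset.pair_comm _ _⟩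
        · obtain ⟨hbx, hay⟩ := hD x y b a hτ hba hxa hquot
          have hx : x = a⁻¹ := by rw [hbx, inv_inv]
          have hy : y = b⁻¹ := by rw [hay, inv_inv]
          subst hx; subst hy
          refine Or.inr ⟨?_, rfl⟩
          have hc : c = a * (b * g) := by rw [← h1]; group
          rw [hc, mul_assoc]
    · rintro (⟨rfl, rfl⟩ | ⟨rfl, rfl⟩)
      · refine ⟨hab, ?_⟩
        rw [Finset.image_insert, Finset.image_singleton]
      · refine ⟨hC a b hab, ?_⟩
        rw [Finset.image_insert, Finset.image_singleton]
        have e1 : a⁻¹ * (a * b * g) = b * g := by group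
        have e2 : b⁻¹ * (a * b * g) = a * g := by
          rw [hcomm]; group
        rw [e1, e2, Finset.pair_comm]
  · intro h
    have hg : g = a * b * g := (Prod.mk.injEq .. ▸ h).1
    have : a * b = 1 := by
      have := hg.symm
      calc a * b = a * b * g * g⁻¹ := by group
        _ = g * g⁻¹ := by rw [← hg]
        _ = 1 := by group
    exact h0 a b hab (eq_inv_of_mul_eq_one_right this)
end

section
/- In a commutative triplets structure CTS[S,G] where S is d-regular (every edge of S lies in exactly d triangles), the edge-random-walk graph G_walk of the resulting complex C is 4d-regular: every edge of C is adjacent (shares a triangle of C) with exactly 4d other edges. -/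
open scoped Classical

lemma fpair_eq {G : Type*} [DecidableEq G] {x y u v : G} :
    ({x,y}:Finset G) = {u,v} ↔ (x = u ∧ y = v) ∨ (x = v ∧ y = u) := by
  rw [← Finset.coe_inj]; simp only [Finset.coe_insert, Finset.coe_singleton]
  exact Set.pair_eq_pair_iff

lemma card3_distinct {G : Type*} [DecidableEq G] {a b c : G}
    (h : ({a,b,c}:Finset G).card = 3) : a ≠ b ∧ a ≠ c ∧ b ≠ c := by
  by_contra hcon
  push_neg at hcon
  rcases Decidable.em (a = b) with rfl | h1
  · have : ({a,a,c} : Finset G) = {a,c} := by ext x; simp [or_comm]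
    rw [this] at h
    have := Finset.card_insert_le a ({c} : Finset G)
    simp at this; omega
  rcases Decidable.em (a = c) with rfl | h2
  · have : ({a,b,a} : Finset G) = {a,b} := by ext x; simp; tauto
    rw [this] at h
    have := Finset.card_insert_le a ({b} : Finset G)
    simp at this; omega
  have hbc := hcon h1 h2
  subst hbc
  have : ({a,b,b} : Finset G) = {a,b} := by ext x; simp [or_comm]
  rw [this] at h
  have := Finset.card_insert_le a ({b} : Finset G)
  simp at this; omega

lemma exists_third {G : Type*} [DecidableEq G] {t : Finset G} {x y : G}
    (h3 : t.card = 3) (hx : x ∈ t) (hy : y ∈ t) (hxy : x ≠ y) :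
    ∃ z, z ≠ x ∧ z ≠ y ∧ t = {x,y,z} := by
  have hsub : ({x,y} : Finset G) ⊆ t := by
    intro w hw; simp at hw; rcases hw with rfl | rfl <;> assumption
  have hc2 : ({x,y} : Finset G).card = 2 := by
    rw [Finset.card_insert_of_notMem (by simp [hxy]), Finset.card_singleton]
  have hc : (t \ {x,y}).card = 1 := by
    rw [Finset.card_sdiff_of_subset hsub, hc2, h3]
  obtain ⟨z, hz⟩ := Finset.card_eq_one.mp hc
  have hzm : z ∈ t \ ({x,y} : Finset G) := hz ▸ Finset.mem_singleton_self z
  rw [Finset.mem_sdiff] at hzm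
  simp only [Finset.mem_insert, Finset.mem_singleton] at hzm
  push_neg at hzm
  refine ⟨z, hzm.2.1, hzm.2.2, ?_⟩
  apply Finset.Subset.antisymm
  · intro w hw
    by_cases hwxy : w ∈ ({x,y} : Finset G)
    · simp at hwxy ⊢; tauto
    · have : w ∈ t \ ({x,y} : Finset G) := Finset.mem_sdiff.mpr ⟨hw, hwxy⟩
      rw [hz, Finset.mem_singleton] at this
      simp [this]
  · intro w hw
    simp at hw
    rcases hw with rfl | rfl | rfl
    exacts [hx, hy, hzm.1]

lemma pair_sub_triple {G : Type*} [DecidableEq G] {e : Finset G} {x y z : G}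
    (hsub : e ⊆ ({x,y,z} : Finset G)) (hc : e.card = 2) (hne : e ≠ {x,y})
    (hxy : x ≠ y) (hxz : x ≠ z) (hyz : y ≠ z) :
    e = {x,z} ∨ e = {y,z} := by
  obtain ⟨u, v, huv, rfl⟩ := Finset.card_eq_two.mp hc
  have hu : u ∈ ({x,y,z} : Finset G) := hsub (by simp)
  have hv : v ∈ ({x,y,z} : Finset G) := hsub (by simp)
  simp only [Finset.mem_insert, Finset.mem_singleton] at hu hv
  rcases hu with rfl | rfl | rfl <;> rcases hv with rfl | rfl | rfl <;>
    first
      | exact absurd rfl huv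
      | exact absurd rfl hne
      | (left; rfl)
      | (right; rfl)
      | (exact absurd (Finset.pair_comm _ _) hne)
      | (left; exact Finset.pair_comm _ _)
      | (right; exact Finset.pair_comm _ _)

lemma pair_left_cancel {G : Type*} [DecidableEq G] {x y z : G}
    (hy : y ≠ x) (h : ({x,y}:Finset G) = {x,z}) : y = z := by
  rcases fpair_eq.mp h with ⟨_, h2⟩ | ⟨h1, h2⟩
  · exact h2
  · exact absurd h2 hy


/-- In a CTS built from a `d`-regular complex `S`, the edge random walk graph of the
resulting complex `C` is `4d`-regular: every edge of `C` is adjacent (shares a triangle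
of `C`) with exactly `4d` other edges. -/
theorem cts_walk_regular {G : Type*} [Group G] [DecidableEq G]
    (tri : Set (Finset G)) (d : ℕ)
    (h3 : ∀ t ∈ tri, t.card = 3)
    (hA : ∀ e ∈ edgesOf tri, Set.ncard {t | t ∈ tri ∧ e ⊆ t} = d)
    (h0 : ∀ a b : G, ({a, b} : Finset G) ∈ edgesOf tri → b ≠ a⁻¹)
    (hB : ∀ a b : G, ({a, b} : Finset G) ∈ edgesOf tri → a * b = b * a)
    (hC : ∀ a b : G, ({a, b} : Finset G) ∈ edgesOf tri →
      ({a⁻¹, b⁻¹} : Finset G) ∈ edgesOf tri)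
    (hD : ∀ a b a' b' : G, ({a, b} : Finset G) ∈ edgesOf tri →
      ({a', b'} : Finset G) ∈ edgesOf tri → (a, b) ≠ (a', b') →
      a * b⁻¹ = a' * b'⁻¹ → b' = a⁻¹ ∧ a' = b⁻¹) :
    ∀ (g : G) (a b : G), ({a, b} : Finset G) ∈ edgesOf tri →
      Set.ncard {e' : Finset G | e' ≠ ({a * g, b * g} : Finset G) ∧ e'.card = 2 ∧
        ∃ t ∈ tri, ∃ h : G, e' ⊆ t.image (fun s => s * h) ∧
          ({a * g, b * g} : Finset G) ⊆ t.image (fun s => s * h)} = 4 * d := by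

  intro g a b hab
  classical
  obtain ⟨hcard2, t0, ht0, hsub0⟩ := hab
  have hab' : a ≠ b := by
    intro h; subst h; simp at hcard2
  have habE : ({a, b} : Finset G) ∈ edgesOf tri := ⟨hcard2, t0, ht0, hsub0⟩
  have hcomm : a * b = b * a := hB a b habE
  have hinvE : ({a⁻¹, b⁻¹} : Finset G) ∈ edgesOf tri := hC a b habE
  have hab'' : a⁻¹ ≠ b⁻¹ := fun h => hab' (inv_injective h)
  have hba : b ≠ a⁻¹ := h0 a b habE
  -- third-vertex sets
  set X1 : Set G := {c | ({a, b, c} : Finset G) ∈ tri} with hX1def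
  set X2 : Set G := {c | ({a⁻¹, b⁻¹, c} : Finset G) ∈ tri} with hX2def
  have hX1c : ∀ c ∈ X1, c ≠ a ∧ c ≠ b := by
    intro c hc
    obtain ⟨h1, h2, h3'⟩ := card3_distinct (h3 _ hc)
    exact ⟨fun h => h2 h.symm, fun h => h3' h.symm⟩
  have hX2c : ∀ c ∈ X2, c ≠ a⁻¹ ∧ c ≠ b⁻¹ := by
    intro c hc
    obtain ⟨h1, h2, h3'⟩ := card3_distinct (h3 _ hc)
    exact ⟨fun h => h2 h.symm, fun h => h3' h.symm⟩
  -- edges inside the triangles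
  have hedge1 : ∀ c ∈ X1, ({a, c} : Finset G) ∈ edgesOf tri ∧
      ({b, c} : Finset G) ∈ edgesOf tri := by
    intro c hc
    obtain ⟨hca, hcb⟩ := hX1c c hc
    constructor
    · refine ⟨?_, {a,b,c}, hc, ?_⟩
      · rw [Finset.card_insert_of_notMem (by simp [Ne.symm hca]), Finset.card_singleton]
      · intro w hw; simp at hw ⊢; tauto
    · refine ⟨?_, {a,b,c}, hc, ?_⟩
      · rw [Finset.card_insert_of_notMem (by simp [Ne.symm hcb]), Finset.card_singleton]
      · intro w hw; simp at hw ⊢; tauto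
  have hedge2 : ∀ c ∈ X2, ({a⁻¹, c} : Finset G) ∈ edgesOf tri ∧
      ({b⁻¹, c} : Finset G) ∈ edgesOf tri := by
    intro c hc
    obtain ⟨hca, hcb⟩ := hX2c c hc
    constructor
    · refine ⟨?_, {a⁻¹,b⁻¹,c}, hc, ?_⟩
      · rw [Finset.card_insert_of_notMem (by simp [Ne.symm hca]), Finset.card_singleton]
      · intro w hw; simp at hw ⊢; tauto
    · refine ⟨?_, {a⁻¹,b⁻¹,c}, hc, ?_⟩
      · rw [Finset.card_insert_of_notMem (by simp [Ne.symm hcb]), Finset.card_singleton]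
      · intro w hw; simp at hw ⊢; tauto
  -- the cross condition: third vertices of the two families never coincide
  have hcross : ∀ c ∈ X1, ∀ c' ∈ X2, c ≠ c' * (a * b) := by
    intro c hc c' hc' heq
    obtain ⟨hca, hcb⟩ := hX1c c hc
    obtain ⟨hc'a, hc'b⟩ := hX2c c' hc'
    have e1 : ({c', b⁻¹} : Finset G) ∈ edgesOf tri := by
      refine ⟨?_, {a⁻¹,b⁻¹,c'}, hc', ?_⟩
      · rw [Finset.card_insert_of_notMem (by simp [hc'b]), Finset.card_singleton]
      · intro w hw; simp at hw ⊢; tauto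
    have e2 : ({a⁻¹, c⁻¹} : Finset G) ∈ edgesOf tri := hC a c (hedge1 c hc).1
    have hcomm' : a⁻¹ * c' = c' * a⁻¹ := hB _ _ (hedge2 c' hc').1
    have key : c' * (b⁻¹)⁻¹ = a⁻¹ * (c⁻¹)⁻¹ := by
      rw [inv_inv, inv_inv, heq, ← mul_assoc, hcomm']
      group
    have hne : (c', b⁻¹) ≠ (a⁻¹, c⁻¹) := by
      intro h
      exact hc'a (congrArg Prod.fst h)
    obtain ⟨h1, h2⟩ := hD c' b⁻¹ a⁻¹ c⁻¹ e1 e2 hne key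
    -- h2 : a⁻¹ = (b⁻¹)⁻¹ = b
    rw [inv_inv] at h2
    exact hba h2.symm
  -- membership of the four families in the walk set
  have hmemA : ∀ c ∈ X1, ∀ x ∈ ({a * g, b * g} : Finset G),
      ({x, c * g} : Finset G) ∈ {e' : Finset G | e' ≠ ({a * g, b * g} : Finset G) ∧ e'.card = 2 ∧
        ∃ t ∈ tri, ∃ h : G, e' ⊆ t.image (fun s => s * h) ∧
          ({a * g, b * g} : Finset G) ⊆ t.image (fun s => s * h)} := by
    intro c hc x hx
    obtain ⟨hca, hcb⟩ := hX1c c hc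
    simp only [Finset.mem_insert, Finset.mem_singleton] at hx
    have himg : ({a,b,c} : Finset G).image (fun s => s * g) = {a * g, b * g, c * g} := by
      simp [Finset.image_insert]
    refine ⟨?_, ?_, {a,b,c}, hc, g, ?_, ?_⟩
    · intro h
      rcases hx with rfl | rfl
      · have hcg : c * g = b * g :=
          pair_left_cancel (fun hh => hca (mul_right_cancel hh)) h
        exact hcb (mul_right_cancel hcg)
      · have h' : ({b * g, c * g} : Finset G) = {b * g, a * g} :=
          h.trans (Finset.pair_comm _ _)
        have hcg : c * g = a * g :=
          pair_left_cancel (fun hh => hcb (mul_right_cancel hh)) h'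
        exact hca (mul_right_cancel hcg)
    · rcases hx with rfl | rfl
      · rw [Finset.card_insert_of_notMem
          (by simp only [Finset.mem_singleton]; exact fun hh => hca (mul_right_cancel hh).symm),
          Finset.card_singleton]
      · rw [Finset.card_insert_of_notMem
          (by simp only [Finset.mem_singleton]; exact fun hh => hcb (mul_right_cancel hh).symm),
          Finset.card_singleton]
    · rw [himg]; intro w hw; simp at hw ⊢; rcases hx with rfl | rfl <;> tauto
    · rw [himg]; intro w hw; simp at hw ⊢; tauto
  have habg : a⁻¹ * (a * b * g) = b * g := by group
  have hbbg : b⁻¹ * (a * b * g) = a * g := by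
    rw [hcomm]; group
  have hmemB : ∀ c ∈ X2, ∀ x ∈ ({a * g, b * g} : Finset G),
      ({x, c * (a * b * g)} : Finset G) ∈ {e' : Finset G | e' ≠ ({a * g, b * g} : Finset G) ∧ e'.card = 2 ∧
        ∃ t ∈ tri, ∃ h : G, e' ⊆ t.image (fun s => s * h) ∧
          ({a * g, b * g} : Finset G) ⊆ t.image (fun s => s * h)} := by
    intro c hc x hx
    obtain ⟨hca, hcb⟩ := hX2c c hc
    have hxag : c * (a * b * g) ≠ a * g := by
      intro h; rw [← hbbg] at h; exact hcb (mul_right_cancel h)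
    have hxbg : c * (a * b * g) ≠ b * g := by
      intro h; rw [← habg] at h; exact hca (mul_right_cancel h)
    simp only [Finset.mem_insert, Finset.mem_singleton] at hx
    have himg : ({a⁻¹,b⁻¹,c} : Finset G).image (fun s => s * (a * b * g)) =
        {b * g, a * g, c * (a * b * g)} := by
      simp only [Finset.image_insert, Finset.image_singleton, habg, hbbg]
    refine ⟨?_, ?_, {a⁻¹,b⁻¹,c}, hc, a * b * g, ?_, ?_⟩
    · intro h
      rcases hx with rfl | rfl
      · have hcg : c * (a * b * g) = b * g := pair_left_cancel hxag h
        exact hxbg hcg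
      · have h' : ({b * g, c * (a * b * g)} : Finset G) = {b * g, a * g} :=
          h.trans (Finset.pair_comm _ _)
        have hcg : c * (a * b * g) = a * g := pair_left_cancel hxbg h'
        exact hxag hcg
    · rcases hx with rfl | rfl
      · rw [Finset.card_insert_of_notMem
          (by simp only [Finset.mem_singleton]; exact fun hh => hxag hh.symm),
          Finset.card_singleton]
      · rw [Finset.card_insert_of_notMem
          (by simp only [Finset.mem_singleton]; exact fun hh => hxbg hh.symm),
          Finset.card_singleton]
    · rw [himg]; intro w hw; simp at hw ⊢; rcases hx with rfl | rfl <;> tauto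
    · rw [himg]; intro w hw; simp at hw ⊢; tauto
  -- the key set identity
  have hE : {e' : Finset G | e' ≠ ({a * g, b * g} : Finset G) ∧ e'.card = 2 ∧
        ∃ t ∈ tri, ∃ h : G, e' ⊆ t.image (fun s => s * h) ∧
          ({a * g, b * g} : Finset G) ⊆ t.image (fun s => s * h)} =
      (fun c => ({a * g, c * g} : Finset G)) '' X1 ∪
      (fun c => ({b * g, c * g} : Finset G)) '' X1 ∪
      ((fun c => ({a * g, c * (a * b * g)} : Finset G)) '' X2 ∪
      (fun c => ({b * g, c * (a * b * g)} : Finset G)) '' X2) := by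
    apply Set.Subset.antisymm
    · rintro e' ⟨hne, hc2, t, ht, h, hsubE, hsubAB⟩
      have hag : a * g ∈ t.image (fun s => s * h) := hsubAB (by simp)
      have hbg : b * g ∈ t.image (fun s => s * h) := hsubAB (by simp)
      simp only [Finset.mem_image] at hag hbg
      obtain ⟨s1, hs1, hs1e⟩ := hag
      obtain ⟨s2, hs2, hs2e⟩ := hbg
      have hs12 : s1 ≠ s2 := by
        intro hs; rw [hs, hs2e] at hs1e; exact hab' (mul_right_cancel hs1e).symm
      have eS : ({s1, s2} : Finset G) ∈ edgesOf tri := by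
        refine ⟨?_, t, ht, ?_⟩
        · rw [Finset.card_insert_of_notMem (by simp [hs12]), Finset.card_singleton]
        · intro w hw; simp at hw; rcases hw with rfl | rfl <;> assumption
      have key : a * b⁻¹ = s1 * s2⁻¹ := by
        have h1 : s1 = a * g * h⁻¹ := by rw [← hs1e]; group
        have h2 : s2 = b * g * h⁻¹ := by rw [← hs2e]; group
        rw [h1, h2]; group
      by_cases hpq : (a, b) = (s1, s2)
      · -- family 1 : h = g
        have ha1 : a = s1 := congrArg Prod.fst hpq
        have hb1 : b = s2 := congrArg Prod.snd hpq
        rw [← ha1] at hs1 hs1e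
        rw [← hb1] at hs2
        have hg : h = g := mul_left_cancel hs1e
        rw [hg] at hsubE
        obtain ⟨c, hcsa, hcsb, htEq⟩ := exists_third (h3 t ht) hs1 hs2 hab'
        have hcX1 : c ∈ X1 := by rw [hX1def]; exact Set.mem_setOf_eq ▸ (htEq ▸ ht)
        rw [htEq] at hsubE
        have himg : ({a,b,c} : Finset G).image (fun s => s * g) =
            {a * g, b * g, c * g} := by simp [Finset.image_insert]
        rw [himg] at hsubE
        have hd1 : a * g ≠ b * g := fun hh => hab' (mul_right_cancel hh)
        have hd2 : a * g ≠ c * g := fun hh => hcsa (mul_right_cancel hh).symm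
        have hd3 : b * g ≠ c * g := fun hh => hcsb (mul_right_cancel hh).symm
        rcases pair_sub_triple hsubE hc2 hne hd1 hd2 hd3 with rfl | rfl
        · exact Or.inl (Or.inl ⟨c, hcX1, rfl⟩)
        · exact Or.inl (Or.inr ⟨c, hcX1, rfl⟩)
      · -- family 2 : h = a * b * g
        obtain ⟨h1, h2⟩ := hD a b s1 s2 habE eS hpq key
        rw [h2] at hs1 hs1e
        rw [h1] at hs2
        have hh : h = a * b * g := by
          have hx : b⁻¹ * h = a * g := hs1e
          calc h = b * (b⁻¹ * h) := by group
          _ = b * (a * g) := by rw [hx]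
          _ = a * b * g := by rw [← mul_assoc, ← hcomm]
        rw [hh] at hsubE
        obtain ⟨c, hcsa, hcsb, htEq⟩ := exists_third (h3 t ht) hs2 hs1 hab''
        have hcX2 : c ∈ X2 := by rw [hX2def]; exact Set.mem_setOf_eq ▸ (htEq ▸ ht)
        rw [htEq] at hsubE
        have himg : ({a⁻¹,b⁻¹,c} : Finset G).image (fun s => s * (a * b * g)) =
            {b * g, a * g, c * (a * b * g)} := by
          simp only [Finset.image_insert, Finset.image_singleton, habg, hbbg]
        rw [himg] at hsubE
        have hd1 : b * g ≠ a * g := fun hh => hab' (mul_right_cancel hh).symm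
        have hd2 : b * g ≠ c * (a * b * g) := by
          intro hh; rw [← habg] at hh; exact hcsa (mul_right_cancel hh).symm
        have hd3 : a * g ≠ c * (a * b * g) := by
          intro hh; rw [← hbbg] at hh; exact hcsb (mul_right_cancel hh).symm
        have hne' : e' ≠ ({b * g, a * g} : Finset G) := by
          rw [Finset.pair_comm]; exact hne
        rcases pair_sub_triple hsubE hc2 hne' hd1 hd2 hd3 with rfl | rfl
        · exact Or.inr (Or.inr ⟨c, hcX2, rfl⟩)
        · exact Or.inr (Or.inl ⟨c, hcX2, rfl⟩)
    · rintro e' (( ⟨c, hc, rfl⟩ | ⟨c, hc, rfl⟩ ) | ( ⟨c, hc, rfl⟩ | ⟨c, hc, rfl⟩ ))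
      · exact hmemA c hc _ (by simp)
      · exact hmemA c hc _ (by simp)
      · exact hmemB c hc _ (by simp)
      · exact hmemB c hc _ (by simp)
  rw [hE]
  -- injectivity of the four parametrizations
  have hgA : Set.InjOn (fun c => ({a * g, c * g} : Finset G)) X1 := by
    intro c1 h1 c2 h2 heq
    have hne1 : c1 * g ≠ a * g := fun hh => (hX1c c1 h1).1 (mul_right_cancel hh)
    exact mul_right_cancel (pair_left_cancel hne1 heq)
  have hgB : Set.InjOn (fun c => ({b * g, c * g} : Finset G)) X1 := by
    intro c1 h1 c2 h2 heq
    have hne1 : c1 * g ≠ b * g := fun hh => (hX1c c1 h1).2 (mul_right_cancel hh)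
    exact mul_right_cancel (pair_left_cancel hne1 heq)
  have hgC : Set.InjOn (fun c => ({a * g, c * (a * b * g)} : Finset G)) X2 := by
    intro c1 h1 c2 h2 heq
    have hne1 : c1 * (a * b * g) ≠ a * g := by
      intro hh; rw [← hbbg] at hh; exact (hX2c c1 h1).2 (mul_right_cancel hh)
    exact mul_right_cancel (pair_left_cancel hne1 heq)
  have hgD : Set.InjOn (fun c => ({b * g, c * (a * b * g)} : Finset G)) X2 := by
    intro c1 h1 c2 h2 heq
    have hne1 : c1 * (a * b * g) ≠ b * g := by
      intro hh; rw [← habg] at hh; exact (hX2c c1 h1).1 (mul_right_cancel hh)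
    exact mul_right_cancel (pair_left_cancel hne1 heq)
  -- cardinality of X1 and X2
  have hT1 : (fun c => ({a, b, c} : Finset G)) '' X1 =
      {t | t ∈ tri ∧ ({a, b} : Finset G) ⊆ t} := by
    ext t; constructor
    · rintro ⟨c, hc, rfl⟩
      exact ⟨hc, by intro w hw; simp at hw ⊢; tauto⟩
    · rintro ⟨ht, hsub⟩
      have ha : a ∈ t := hsub (by simp)
      have hb : b ∈ t := hsub (by simp)
      obtain ⟨c, _, _, rfl⟩ := exists_third (h3 t ht) ha hb hab'
      exact ⟨c, ht, rfl⟩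
  have hT1inj : Set.InjOn (fun c => ({a, b, c} : Finset G)) X1 := by
    intro c1 h1 c2 h2 heq
    have heq' : ({a, b, c1} : Finset G) = {a, b, c2} := heq
    have hm : c1 ∈ ({a, b, c2} : Finset G) := by rw [← heq']; simp
    simp only [Finset.mem_insert, Finset.mem_singleton] at hm
    rcases hm with hm | hm | hm
    · exact absurd hm (hX1c c1 h1).1
    · exact absurd hm (hX1c c1 h1).2
    · exact hm
  have hX1card : X1.ncard = d := by
    rw [← Set.ncard_image_of_injOn hT1inj, hT1]; exact hA _ habE
  have hT2 : (fun c => ({a⁻¹, b⁻¹, c} : Finset G)) '' X2 =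
      {t | t ∈ tri ∧ ({a⁻¹, b⁻¹} : Finset G) ⊆ t} := by
    ext t; constructor
    · rintro ⟨c, hc, rfl⟩
      exact ⟨hc, by intro w hw; simp at hw ⊢; tauto⟩
    · rintro ⟨ht, hsub⟩
      have ha : a⁻¹ ∈ t := hsub (by simp)
      have hb : b⁻¹ ∈ t := hsub (by simp)
      obtain ⟨c, _, _, rfl⟩ := exists_third (h3 t ht) ha hb hab''
      exact ⟨c, ht, rfl⟩
  have hT2inj : Set.InjOn (fun c => ({a⁻¹, b⁻¹, c} : Finset G)) X2 := by
    intro c1 h1 c2 h2 heq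
    have heq' : ({a⁻¹, b⁻¹, c1} : Finset G) = {a⁻¹, b⁻¹, c2} := heq
    have hm : c1 ∈ ({a⁻¹, b⁻¹, c2} : Finset G) := by rw [← heq']; simp
    simp only [Finset.mem_insert, Finset.mem_singleton] at hm
    rcases hm with hm | hm | hm
    · exact absurd hm (hX2c c1 h1).1
    · exact absurd hm (hX2c c1 h1).2
    · exact hm
  have hX2card : X2.ncard = d := by
    rw [← Set.ncard_image_of_injOn hT2inj, hT2]; exact hA _ hinvE
  have hX1ne : X1.Nonempty := by
    have ha : a ∈ t0 := hsub0 (by simp)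
    have hb : b ∈ t0 := hsub0 (by simp)
    obtain ⟨c, _, _, rfl⟩ := exists_third (h3 t0 ht0) ha hb hab'
    exact ⟨c, ht0⟩
  by_cases hfin : X1.Finite
  · -- the finite (generic) case
    have hd : 0 < d := by
      rw [← hX1card]; exact (Set.ncard_pos hfin).mpr hX1ne
    have hfin2 : X2.Finite := by
      by_contra hinf
      rw [Set.Infinite.ncard hinf] at hX2card
      omega
    -- disjointness of the four families
    have hdAB : Disjoint ((fun c => ({a * g, c * g} : Finset G)) '' X1)
        ((fun c => ({b * g, c * g} : Finset G)) '' X1) := by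
      rw [Set.disjoint_left]
      rintro x ⟨c1, hc1, rfl⟩ ⟨c2, hc2, heq⟩
      rcases fpair_eq.mp heq with ⟨hp, hq⟩ | ⟨hp, hq⟩
      · exact hab' (mul_right_cancel hp).symm
      · exact (hX1c c2 hc2).1 (mul_right_cancel hq)
    have hdAC : Disjoint ((fun c => ({a * g, c * g} : Finset G)) '' X1)
        ((fun c => ({a * g, c * (a * b * g)} : Finset G)) '' X2) := by
      rw [Set.disjoint_left]
      rintro x ⟨c1, hc1, rfl⟩ ⟨c2, hc2, heq⟩
      rcases fpair_eq.mp heq with ⟨hp, hq⟩ | ⟨hp, hq⟩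
      · apply hcross c1 hc1 c2 hc2
        rw [← mul_assoc] at hq
        exact (mul_right_cancel hq).symm
      · exact (hX1c c1 hc1).1 (mul_right_cancel hp.symm)
    have hdAD : Disjoint ((fun c => ({a * g, c * g} : Finset G)) '' X1)
        ((fun c => ({b * g, c * (a * b * g)} : Finset G)) '' X2) := by
      rw [Set.disjoint_left]
      rintro x ⟨c1, hc1, rfl⟩ ⟨c2, hc2, heq⟩
      rcases fpair_eq.mp heq with ⟨hp, hq⟩ | ⟨hp, hq⟩
      · exact hab' (mul_right_cancel hp).symm
      · exact (hX1c c1 hc1).2 (mul_right_cancel hp.symm)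
    have hdBC : Disjoint ((fun c => ({b * g, c * g} : Finset G)) '' X1)
        ((fun c => ({a * g, c * (a * b * g)} : Finset G)) '' X2) := by
      rw [Set.disjoint_left]
      rintro x ⟨c1, hc1, rfl⟩ ⟨c2, hc2, heq⟩
      rcases fpair_eq.mp heq with ⟨hp, hq⟩ | ⟨hp, hq⟩
      · exact hab' (mul_right_cancel hp)
      · exact (hX1c c1 hc1).1 (mul_right_cancel hp.symm)
    have hdBD : Disjoint ((fun c => ({b * g, c * g} : Finset G)) '' X1)
        ((fun c => ({b * g, c * (a * b * g)} : Finset G)) '' X2) := by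
      rw [Set.disjoint_left]
      rintro x ⟨c1, hc1, rfl⟩ ⟨c2, hc2, heq⟩
      rcases fpair_eq.mp heq with ⟨hp, hq⟩ | ⟨hp, hq⟩
      · apply hcross c1 hc1 c2 hc2
        rw [← mul_assoc] at hq
        exact (mul_right_cancel hq).symm
      · exact (hX1c c1 hc1).2 (mul_right_cancel hp.symm)
    have hdCD : Disjoint ((fun c => ({a * g, c * (a * b * g)} : Finset G)) '' X2)
        ((fun c => ({b * g, c * (a * b * g)} : Finset G)) '' X2) := by
      rw [Set.disjoint_left]
      rintro x ⟨c1, hc1, rfl⟩ ⟨c2, hc2, heq⟩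
      rcases fpair_eq.mp heq with ⟨hp, hq⟩ | ⟨hp, hq⟩
      · exact hab' (mul_right_cancel hp).symm
      · rw [← habg] at hp
        exact (hX2c c1 hc1).1 (mul_right_cancel hp.symm)
    have hfA := hfin.image (fun c => ({a * g, c * g} : Finset G))
    have hfB := hfin.image (fun c => ({b * g, c * g} : Finset G))
    have hfC := hfin2.image (fun c => ({a * g, c * (a * b * g)} : Finset G))
    have hfD := hfin2.image (fun c => ({b * g, c * (a * b * g)} : Finset G))
    rw [Set.ncard_union_eq (by
        rw [Set.disjoint_union_left, Set.disjoint_union_right, Set.disjoint_union_right]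
        exact ⟨⟨hdAC, hdAD⟩, hdBC, hdBD⟩)
      (hfA.union hfB) (hfC.union hfD),
      Set.ncard_union_eq hdAB hfA hfB, Set.ncard_union_eq hdCD hfC hfD,
      Set.ncard_image_of_injOn hgA, Set.ncard_image_of_injOn hgB,
      Set.ncard_image_of_injOn hgC, Set.ncard_image_of_injOn hgD,
      hX1card, hX2card]
    ring
  · -- the degenerate infinite case : d = 0 and the walk set is infinite
    have hX1inf : X1.Infinite := hfin
    have hd0 : d = 0 := by rw [← hX1card, Set.Infinite.ncard hX1inf]
    have hAinf : ((fun c => ({a * g, c * g} : Finset G)) '' X1).Infinite :=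
      Set.Infinite.image hgA hX1inf
    have hUinf : ((fun c => ({a * g, c * g} : Finset G)) '' X1 ∪
        (fun c => ({b * g, c * g} : Finset G)) '' X1 ∪
        ((fun c => ({a * g, c * (a * b * g)} : Finset G)) '' X2 ∪
        (fun c => ({b * g, c * (a * b * g)} : Finset G)) '' X2)).Infinite :=
      hAinf.mono (by intro x hx; exact Or.inl (Or.inl hx))
    rw [Set.Infinite.ncard hUinf, hd0]
end

section
/- In a commutative triplets structure C = CTS[S,G], for g ≠ g' in G and types τ, τ' ∈ S(1), if E(g,τ) = E(g',τ') then g' = τ₁τ₂·g and τ' = {τ₁⁻¹, τ₂⁻¹}. -/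
open scoped Classical

/-- In a CTS `C = CTS[S,G]`, if `E(g,τ) = E(g',τ')` with `g ≠ g'`, then
`g' = τ₁τ₂·g` and `τ' = {τ₁⁻¹, τ₂⁻¹}`. -/
theorem cts_double {G : Type*} [Group G] [DecidableEq G]
    (tri : Set (Finset G))
    (h3 : ∀ t ∈ tri, t.card = 3)
    (h0 : ∀ a b : G, ({a, b} : Finset G) ∈ edgesOf tri → b ≠ a⁻¹)
    (hB : ∀ a b : G, ({a, b} : Finset G) ∈ edgesOf tri → a * b = b * a)
    (hC : ∀ a b : G, ({a, b} : Finset G) ∈ edgesOf tri →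
      ({a⁻¹, b⁻¹} : Finset G) ∈ edgesOf tri)
    (hD : ∀ a b a' b' : G, ({a, b} : Finset G) ∈ edgesOf tri →
      ({a', b'} : Finset G) ∈ edgesOf tri → (a, b) ≠ (a', b') →
      a * b⁻¹ = a' * b'⁻¹ → b' = a⁻¹ ∧ a' = b⁻¹)
    {g g' : G} (hgg : g ≠ g') {a b a' b' : G}
    (hab : ({a, b} : Finset G) ∈ edgesOf tri)
    (hab' : ({a', b'} : Finset G) ∈ edgesOf tri)
    (heq : ({a * g, b * g} : Finset G) = ({a' * g', b' * g'} : Finset G)) :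
    g' = a * b * g ∧ ({a', b'} : Finset G) = ({a⁻¹, b⁻¹} : Finset G) := by
  have hne : a ≠ b := by
    intro h; subst h; simpa using hab.1
  have h1 : a * g = a' * g' ∨ a * g = b' * g' := by
    have : a * g ∈ ({a' * g', b' * g'} : Finset G) := by rw [← heq]; simp
    simpa using this
  have h2 : b * g = a' * g' ∨ b * g = b' * g' := by
    have : b * g ∈ ({a' * g', b' * g'} : Finset G) := by rw [← heq]; simp
    simpa using this
  rcases h1 with h1 | h1
  · have h2' : b * g = b' * g' := by
      rcases h2 with h2 | h2
      · exact absurd (mul_right_cancel (h1.trans h2.symm)) hne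
      · exact h2
    have hg1 : g' = a'⁻¹ * (a * g) := by rw [h1]; group
    have hg2 : g' = b'⁻¹ * (b * g) := by rw [h2']; group
    have e : a'⁻¹ * a = b'⁻¹ * b := by
      have h := hg1.symm.trans hg2
      rw [← mul_assoc, ← mul_assoc] at h
      exact mul_right_cancel h
    have hkey : a * b⁻¹ = a' * b'⁻¹ := by
      have ha : a = a' * (b'⁻¹ * b) := by rw [← e]; group
      rw [ha]; group
    have hpne : (a, b) ≠ (a', b') := by
      intro h
      obtain ⟨ha, hb⟩ := Prod.mk.injEq .. ▸ h
      subst ha; subst hb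
      exact hgg (mul_left_cancel h1)
    obtain ⟨hb', ha'⟩ := hD a b a' b' hab hab' hpne hkey
    subst hb'; subst ha'
    constructor
    · rw [hg1, hB a b hab]; group
    · exact Finset.pair_comm _ _
  · have h2' : b * g = a' * g' := by
      rcases h2 with h2 | h2
      · exact h2
      · exact absurd (mul_right_cancel (h1.trans h2.symm)) hne
    have hg1 : g' = b'⁻¹ * (a * g) := by rw [h1]; group
    have hg2 : g' = a'⁻¹ * (b * g) := by rw [h2']; group
    have e : b'⁻¹ * a = a'⁻¹ * b := by
      have h := hg1.symm.trans hg2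
      rw [← mul_assoc, ← mul_assoc] at h
      exact mul_right_cancel h
    have hkey : b * a⁻¹ = a' * b'⁻¹ := by
      have hb : b = a' * (b'⁻¹ * a) := by rw [e]; group
      rw [hb]; group
    have hba : ({b, a} : Finset G) ∈ edgesOf tri := by
      rwa [Finset.pair_comm]
    have hpne : (b, a) ≠ (a', b') := by
      intro h
      obtain ⟨hbb, haa⟩ := Prod.mk.injEq .. ▸ h
      subst hbb; subst haa
      exact hgg (mul_left_cancel h1)
    obtain ⟨hb', ha'⟩ := hD b a a' b' hba hab' hpne hkey
    subst hb'; subst ha'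
    constructor
    · rw [hg1, inv_inv, hB a b hab]; group
    · rfl
end

section
/- In a commutative triplets structure, two distinct edges E, E' of the complex C are adjacent in the random walk graph G_walk (lie in a common triangle) if and only if there exists a center c and types τ, τ' with E = E(c,τ), E' = E(c,τ'), and τ adjacent to τ' in the graph L = G_walk(S) (i.e., τ and τ' are contained in a common triangle of S). -/
open scoped Classical

/-- In a CTS, two distinct edges of `C` lie in a common triangle of `C` iff they have
the form `E(c,τ)`, `E(c,τ')` for a common center `c` and types `τ ≠ τ'` lying in a
common triangle of `S` (i.e. adjacent in `L = G_walk(S)`). -/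
theorem cts_adjacency_iff_common_center {G : Type*} [Group G] [DecidableEq G]
    (tri : Set (Finset G)) (d : ℕ)
    (h3 : ∀ t ∈ tri, t.card = 3)
    (hA : ∀ e ∈ edgesOf tri, Set.ncard {t | t ∈ tri ∧ e ⊆ t} = d)
    (h0 : ∀ a b : G, ({a, b} : Finset G) ∈ edgesOf tri → b ≠ a⁻¹)
    (hB : ∀ a b : G, ({a, b} : Finset G) ∈ edgesOf tri → a * b = b * a)
    (hC : ∀ a b : G, ({a, b} : Finset G) ∈ edgesOf tri →
      ({a⁻¹, b⁻¹} : Finset G) ∈ edgesOf tri)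
    (hD : ∀ a b a' b' : G, ({a, b} : Finset G) ∈ edgesOf tri →
      ({a', b'} : Finset G) ∈ edgesOf tri → (a, b) ≠ (a', b') →
      a * b⁻¹ = a' * b'⁻¹ → b' = a⁻¹ ∧ a' = b⁻¹) :
    ∀ e e' : Finset G,
      (∃ τ ∈ edgesOf tri, ∃ g : G, e = τ.image (fun s => s * g)) →
      (∃ τ ∈ edgesOf tri, ∃ g : G, e' = τ.image (fun s => s * g)) →
      e ≠ e' →
      ((∃ t ∈ tri, ∃ h : G, e ⊆ t.image (fun s => s * h) ∧
          e' ⊆ t.image (fun s => s * h)) ↔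
        (∃ c : G, ∃ τ ∈ edgesOf tri, ∃ τ' ∈ edgesOf tri,
          e = τ.image (fun s => s * c) ∧ e' = τ'.image (fun s => s * c) ∧ τ ≠ τ' ∧
          ∃ t ∈ tri, τ ⊆ t ∧ τ' ⊆ t)) := by
  intro e e' he he' hne
  obtain ⟨τ₀, hτ₀, g, rfl⟩ := he
  obtain ⟨τ₀', hτ₀', g', rfl⟩ := he'
  constructor
  · rintro ⟨t, ht, h, hsub, hsub'⟩
    have hinj : ∀ k : G, Function.Injective (fun s : G => s * k) :=
      fun k => mul_left_injective k
    refine ⟨h, (τ₀.image (fun s => s * g)).image (fun s => s * h⁻¹), ?_,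
      (τ₀'.image (fun s => s * g')).image (fun s => s * h⁻¹), ?_, ?_, ?_, ?_,
      t, ht, ?_, ?_⟩
    · refine ⟨?_, t, ht, ?_⟩
      · rw [Finset.card_image_of_injective _ (hinj _),
          Finset.card_image_of_injective _ (hinj _)]
        exact hτ₀.1
      · intro x hx
        obtain ⟨y, hy, rfl⟩ := Finset.mem_image.mp hx
        obtain ⟨z, hz, hzy⟩ := Finset.mem_image.mp (hsub hy)
        simpa [← hzy] using hz
    · refine ⟨?_, t, ht, ?_⟩
      · rw [Finset.card_image_of_injective _ (hinj _),
          Finset.card_image_of_injective _ (hinj _)]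
        exact hτ₀'.1
      · intro x hx
        obtain ⟨y, hy, rfl⟩ := Finset.mem_image.mp hx
        obtain ⟨z, hz, hzy⟩ := Finset.mem_image.mp (hsub' hy)
        simpa [← hzy] using hz
    · ext x; simp [Finset.mem_image]
    · ext x; simp [Finset.mem_image]
    · intro hEq
      exact hne (Finset.image_injective (hinj h⁻¹) hEq)
    · intro x hx
      obtain ⟨y, hy, rfl⟩ := Finset.mem_image.mp hx
      obtain ⟨z, hz, hzy⟩ := Finset.mem_image.mp (hsub hy)
      simpa [← hzy] using hz
    · intro x hx
      obtain ⟨y, hy, rfl⟩ := Finset.mem_image.mp hx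
      obtain ⟨z, hz, hzy⟩ := Finset.mem_image.mp (hsub' hy)
      simpa [← hzy] using hz
  · rintro ⟨c, τ, hτ, τ', hτ', hEq, hEq', hneq, t, ht, hτt, hτ't⟩
    exact ⟨t, ht, c, hEq ▸ Finset.image_subset_image hτt,
      hEq' ▸ Finset.image_subset_image hτ't⟩
end

section
/- Let χ be even and N = χ − 1. The 2-element subsets of [χ] can be partitioned into N classes U₁,...,U_N such that each class consists of χ/2 pairwise disjoint pairs (a perfect matching of [χ]) and every 2-element subset appears in exactly one class. -/
/-!
A 1-factorization of the complete graph on `α` is the same as a family of fixed-point-free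
involutions `σ i` of `α` such that any two distinct points are swapped by exactly one `σ i`:
the `i`-th perfect matching consists of the pairs `{v, σ i v}`.

For even `χ = N + 1` take the vertices `ZMod N ∪ {∞}` (the round-robin schedule). Since `N` is
odd, `2` is a unit in `ZMod N`; in round `l` the point `∞` is matched with `l`, and every other
`x` with its reflection `2 * l - x` through `l`. Two finite points `x ≠ y` meet exactly in the
round `l` with `2 * l = x + y`.
-/

open Finset Function

variable {α β ι κ : Type*}

section PairsOf

variable [DecidableEq α] {σ : α → α}

lemma pair_eq_of_mem_pair (hinv : Involutive σ) {v x : α} (hx : x ∈ ({v, σ v} : Finset α)) :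
    ({v, σ v} : Finset α) = {x, σ x} := by
  rcases mem_insert.mp hx with rfl | hx
  · rfl
  · rw [mem_singleton.mp hx, hinv, pair_comm]

variable [Fintype α]

def pairsOf (σ : α → α) : Finset (Finset α) :=
  univ.image fun v => {v, σ v}

lemma card_of_mem_pairsOf (hσ : ∀ v, σ v ≠ v) {e : Finset α} (he : e ∈ pairsOf σ) :
    e.card = 2 := by
  obtain ⟨v, -, rfl⟩ := mem_image.mp he
  exact card_pair (hσ v).symm

lemma disjoint_of_mem_pairsOf (hinv : Involutive σ) {e f : Finset α} (he : e ∈ pairsOf σ)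
    (hf : f ∈ pairsOf σ) (hne : e ≠ f) : Disjoint e f := by
  obtain ⟨v, -, rfl⟩ := mem_image.mp he
  obtain ⟨w, -, rfl⟩ := mem_image.mp hf
  by_contra hd
  obtain ⟨x, hxv, hxw⟩ := not_disjoint_iff.mp hd
  exact hne (by rw [pair_eq_of_mem_pair hinv hxv, pair_eq_of_mem_pair hinv hxw])

lemma two_mul_card_pairsOf (hinv : Involutive σ) (hσ : ∀ v, σ v ≠ v) :
    2 * (pairsOf σ).card = Fintype.card α := by
  have hcover : (pairsOf σ).biUnion (fun e => e) = univ := eq_univ_of_forall fun v =>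
    mem_biUnion.mpr ⟨{v, σ v}, mem_image_of_mem _ (mem_univ v), mem_insert_self v _⟩
  rw [← card_univ, ← hcover, card_biUnion fun e he f hf => disjoint_of_mem_pairsOf hinv he hf,
    sum_congr rfl fun e he => card_of_mem_pairsOf hσ he, sum_const, smul_eq_mul, mul_comm]

lemma pair_mem_pairsOf_iff (hinv : Involutive σ) {a b : α} (hab : a ≠ b) :
    {a, b} ∈ pairsOf σ ↔ σ a = b := by
  refine ⟨fun h => ?_, fun h => mem_image.mpr ⟨a, mem_univ a, by rw [h]⟩⟩
  obtain ⟨v, -, hv⟩ := mem_image.mp h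
  have ha : a ∈ ({v, σ v} : Finset α) := hv ▸ mem_insert_self a {b}
  have hb : b ∈ ({a, σ a} : Finset α) := by
    rw [← pair_eq_of_mem_pair hinv ha, hv]
    exact mem_insert_of_mem (mem_singleton_self b)
  simpa [hab.symm, eq_comm] using hb

end PairsOf

structure IsOneFactorization (σ : ι → α → α) : Prop where
  involutive : ∀ i, Involutive (σ i)
  ne_self : ∀ i v, σ i v ≠ v
  existsUnique : ∀ a b, a ≠ b → ∃! i, σ i a = b

lemma IsOneFactorization.conj {σ : ι → α → α} (hσ : IsOneFactorization σ) (e : α ≃ β)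
    (τ : κ ≃ ι) : IsOneFactorization fun k b => e (σ (τ k) (e.symm b)) where
  involutive k b := by simp [hσ.involutive (τ k) (e.symm b)]
  ne_self k b := by simpa [← Equiv.eq_symm_apply] using hσ.ne_self (τ k) (e.symm b)
  existsUnique a b hab := by
    simp only [← Equiv.eq_symm_apply]
    exact τ.existsUnique_congr_right.mpr (hσ.existsUnique _ _ (e.symm.injective.ne hab))

lemma IsOneFactorization.existsUnique_mem_pairsOf [Fintype α] [DecidableEq α]
    {σ : ι → α → α} (hσ : IsOneFactorization σ) {e : Finset α} (he : e.card = 2) :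
    ∃! i, e ∈ pairsOf (σ i) := by
  obtain ⟨a, b, hab, rfl⟩ := card_eq_two.mp he
  simpa only [pair_mem_pairsOf_iff (hσ.involutive _) hab] using hσ.existsUnique a b hab

section RoundRobin

variable {R : Type*} [CommRing R] [DecidableEq R]

def roundRobin (l : R) : Option R → Option R
  | none => some l
  | some x => if x = l then none else some (2 * l - x)

lemma roundRobin_some_eq_some_iff {l x y : R} (hxy : x ≠ y) :
    roundRobin l (some x) = some y ↔ 2 * l = x + y := by
  simp only [roundRobin]
  split_ifs with hxl
  · subst hxl
    simp only [false_iff]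
    exact fun h => hxy (by linear_combination h)
  · rw [Option.some.injEq]
    constructor <;> intro h <;> linear_combination h

lemma isOneFactorization_roundRobin (h2 : IsUnit (2 : R)) :
    IsOneFactorization (roundRobin (R := R)) where
  involutive l
    | none => by simp [roundRobin]
    | some x => by
      by_cases hxl : x = l
      · simp [roundRobin, hxl]
      · have : 2 * l - x ≠ l := fun h => hxl (by linear_combination -h)
        simp [roundRobin, hxl, this]
  ne_self l
    | none => by simp [roundRobin]
    | some x => by
      by_cases hxl : x = l
      · simp [roundRobin, hxl]
      · simp only [roundRobin, if_neg hxl, ne_eq, Option.some.injEq]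
        exact fun h => hxl (h2.mul_left_cancel (by linear_combination -h))
  existsUnique
    | none, none, hab => absurd rfl hab
    | none, some y, _ => by simp [roundRobin, eq_comm]
    | some x, none, _ => by simp [roundRobin, eq_comm]
    | some x, some y, hab => by
      have hxy : x ≠ y := fun h => hab (congrArg some h)
      simp only [roundRobin_some_eq_some_iff hxy]
      exact ⟨h2.unit⁻¹ * (x + y), by simp [← mul_assoc],
        fun l hl => h2.mul_left_cancel (by simp [hl, ← mul_assoc])⟩

end RoundRobin

/-- Baranyai's theorem for `h = 2`: for even `χ`, the 2-element subsets of `[χ]` can be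
partitioned into `χ - 1` classes, each class being a perfect matching of `[χ]`
(`χ/2` pairwise disjoint pairs), with every pair appearing in exactly one class. -/
theorem baranyai_pairs (χ : ℕ) (heven : Even χ) (hpos : 2 ≤ χ) :
    ∃ U : Fin (χ - 1) → Finset (Finset (Fin χ)),
      (∀ l, ∀ e ∈ U l, e.card = 2) ∧
      (∀ l, (U l).card = χ / 2) ∧
      (∀ l, ∀ e ∈ U l, ∀ f ∈ U l, e ≠ f → Disjoint e f) ∧
      (∀ e : Finset (Fin χ), e.card = 2 → ∃! l, e ∈ U l) := by
  obtain ⟨N, rfl⟩ : ∃ N, χ = N + 1 := ⟨χ - 1, by omega⟩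
  have hodd : Odd N := Nat.not_even_iff_odd.mp (Nat.even_add_one.mp heven)
  have : NeZero N := ⟨hodd.pos.ne'⟩
  have h2 : IsUnit (2 : ZMod N) := by
    exact_mod_cast (ZMod.isUnit_iff_coprime 2 N).mpr hodd.coprime_two_left
  let e : Option (ZMod N) ≃ Fin (N + 1) := Fintype.equivOfCardEq (by simp [ZMod.card])
  let τ : Fin (N + 1 - 1) ≃ ZMod N := Fintype.equivOfCardEq (by simp [ZMod.card])
  have hσ := (isOneFactorization_roundRobin h2).conj e τ
  refine ⟨fun l => pairsOf _, fun l _ => card_of_mem_pairsOf (hσ.ne_self l),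
    fun l => ?_, fun l _ he _ hf => disjoint_of_mem_pairsOf (hσ.involutive l) he hf,
    fun _ he => hσ.existsUnique_mem_pairsOf he⟩
  have := two_mul_card_pairsOf (hσ.involutive l) (hσ.ne_self l)
  rw [Fintype.card_fin] at this
  beta_reduce
  omega
end

section
/- In a commutative triplets structure C = CTS[S,G], the graph G_zig (the subgraph of the replacement product G_rep whose edge relation is given by the operator T = ½P_R + ½P_R P_B) is a lift of G_walk(C): the map E(g,τ) = {τ₁g,τ₂g} restricts to a bijection from the G_zig-neighborhood of every vertex (g,τ) onto the G_walk-neighborhood of E(g,τ). Consequently λ(G_walk(C)) ≤ λ(G_zig). -/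
open scoped Classical BigOperators

/-- The supremum of the "nontrivial" eigenvalues of a matrix: eigenvalues admitting an
eigenvector orthogonal to the constant (uniform) vector. -/
noncomputable def ntSup {W : Type*} [Fintype W] (A : Matrix W W ℝ) : ℝ :=
  sSup {μ : ℝ | ∃ x : W → ℝ, x ≠ 0 ∧ (∑ v, x v) = 0 ∧ A.mulVec x = μ • x}

/-- `E(g,τ) = {τ₁g, τ₂g}`, the edge of the complex with center `g` and type `τ`. -/
def ed {G : Type*} [Group G] [DecidableEq G] (g : G) (τ : Finset G) : Finset G :=
  τ.image (fun s => s * g)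

/-- Adjacency in `L = G_walk(S)`: two distinct types lying in a common triangle. -/
def Ladj {G : Type*} [DecidableEq G] (tri : Set (Finset G)) (τ τ' : Finset G) : Prop :=
  τ ∈ edgesOf tri ∧ τ' ∈ edgesOf tri ∧ τ ≠ τ' ∧ ∃ t ∈ tri, τ ⊆ t ∧ τ' ⊆ t

/-- The (out-)neighbor relation of `G_zig`, given by `T = ½P_R + ½P_R P_B`:
a red step, or a blue step followed by a red step. -/
def zigAdj {G : Type*} [Group G] [DecidableEq G] (tri : Set (Finset G))
    (p q : G × Finset G) : Prop :=
  (q.1 = p.1 ∧ Ladj tri p.2 q.2) ∨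
  (∃ a b : G, p.2 = ({a, b} : Finset G) ∧ q.1 = a * b * p.1 ∧
    Ladj tri (p.2.image (·⁻¹)) q.2)

/-- Adjacency in `G_walk(C)`: distinct 2-sets lying in a common triangle of `C`. -/
def walkAdj {G : Type*} [Group G] [DecidableEq G] (tri : Set (Finset G))
    (e e' : Finset G) : Prop :=
  e ≠ e' ∧ e.card = 2 ∧ e'.card = 2 ∧ ∃ t ∈ tri, ∃ h : G, e ⊆ ed h t ∧ e' ⊆ ed h t

/-- Vertices of `G_zig` (and of `G_rep`): pairs (center, type). -/
abbrev zigVerts {G : Type*} [DecidableEq G] (tri : Set (Finset G)) :=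
  {p : G × Finset G // p.2 ∈ edgesOf tri}

/-- Vertices of `G_walk(C)`: the edges of the complex `C`. -/
abbrev cWalkVerts {G : Type*} [Group G] [DecidableEq G] (tri : Set (Finset G)) :=
  {e : Finset G // ∃ τ ∈ edgesOf tri, ∃ g : G, e = ed g τ}

/-- Adjacency matrix of `G_zig`. -/
noncomputable def zigMat {G : Type*} [Group G] [DecidableEq G] [Fintype G]
    (tri : Set (Finset G)) : Matrix (zigVerts tri) (zigVerts tri) ℝ :=
  fun p q => if zigAdj tri p.1 q.1 then 1 else 0

/-- Adjacency matrix of `G_walk(C)`. -/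
noncomputable def cWalkMat {G : Type*} [Group G] [DecidableEq G] [Fintype G]
    (tri : Set (Finset G)) : Matrix (cWalkVerts tri) (cWalkVerts tri) ℝ :=
  fun e f => if walkAdj tri e.1 f.1 then 1 else 0

/-!
By commutation and Condition D, an edge `E(g, {a, b}) = {a g, b g}` of the complex has exactly
two presentations: `(g, {a, b})` and its blue neighbour `(a b g, {a⁻¹, b⁻¹})` in `G_rep`.
Every triangle through the edge is a translate `h t` with `(h, σ)` one of these presentations
and `σ ⊆ t`. Hence the red steps from the two presentations, which are exactly the
`G_zig`-neighbours of `(g, {a, b})`, are mapped by `E` onto the `G_walk`-neighbours of the edge,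
injectively because two types of one triangle with the same product coincide.
So `E` is a two-sheeted covering, and pulling an eigenvector of `G_walk` back along `E` gives an
eigenvector of `G_zig`, still orthogonal to the constants. As `G_walk` is symmetric and
`4d`-regular, such eigenvectors exist, and the inequality of suprema follows.
-/

open Finset Matrix

lemma Finset.pair_eq_pair_iff {α : Type*} [DecidableEq α] {a b c d : α} :
    ({a, b} : Finset α) = {c, d} ↔ a = c ∧ b = d ∨ a = d ∧ b = c := by
  rw [← Finset.coe_inj, Finset.coe_pair, Finset.coe_pair, Set.pair_eq_pair_iff]

lemma Finset.union_eq_of_card_eq_two {α : Type*} [DecidableEq α] {s σ t : Finset α}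
    (hs : s ⊆ t) (hσ : σ ⊆ t) (ht : #t = 3) (hs2 : #s = 2) (hσ2 : #σ = 2) (hne : s ≠ σ) :
    s ∪ σ = t := by
  refine Finset.eq_of_subset_of_card_le (Finset.union_subset hs hσ) ?_
  by_contra! hlt
  have hunion : s ∪ σ = s :=
    (Finset.eq_of_subset_of_card_le Finset.subset_union_left (by omega)).symm
  exact hne (Finset.eq_of_subset_of_card_le (Finset.union_eq_left.mp hunion) (by omega)).symm

lemma Set.BijOn.subtypeMap {α β : Type*} {p : α → Prop} {q : β → Prop} {f : α → β}
    (hpq : ∀ a, p a → q (f a)) {s : Set α} {t : Set β} (h : Set.BijOn f s t)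
    (hs : ∀ a ∈ s, p a) :
    Set.BijOn (Subtype.map f hpq) (Subtype.val ⁻¹' s) (Subtype.val ⁻¹' t) := by
  refine ⟨fun a ha => h.mapsTo ha, fun a ha b hb hab => ?_, fun b hb => ?_⟩
  · exact Subtype.ext (h.injOn ha hb (congrArg Subtype.val hab))
  · obtain ⟨a, ha, hab⟩ := h.surjOn hb
    exact ⟨⟨a, hs a ha⟩, ha, Subtype.ext hab⟩

lemma Finset.sum_comp_of_card_fiber {V W M : Type*} [Fintype V] [Fintype W] [DecidableEq W]
    [AddCommMonoid M] {π : V → W} {k : ℕ} (hπ : ∀ w, #{v | π v = w} = k) (x : W → M) :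
    ∑ v, x (π v) = k • ∑ w, x w := by
  rw [← Finset.sum_fiberwise univ π, Finset.smul_sum]
  refine Finset.sum_congr rfl fun w _ => ?_
  rw [Finset.sum_congr rfl fun v hv => congrArg x (Finset.mem_filter.mp hv).2, Finset.sum_const,
    hπ]

section NontrivialSpectrum

variable {ι : Type*} [Fintype ι]

def ntEigenvalues (A : Matrix ι ι ℝ) : Set ℝ :=
  {μ | ∃ x : ι → ℝ, x ≠ 0 ∧ (∑ v, x v) = 0 ∧ A *ᵥ x = μ • x}

lemma ntEigenvalues_of_isEmpty [IsEmpty ι] (A : Matrix ι ι ℝ) :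
    ntEigenvalues A = ∅ :=
  Set.eq_empty_of_forall_notMem fun _ ⟨_, hx, _⟩ => hx (Subsingleton.elim _ _)

lemma bddAbove_ntEigenvalues (A : Matrix ι ι ℝ) : BddAbove (ntEigenvalues A) := by
  refine ((Module.End.finite_hasEigenvalue (toLin' A)).subset ?_).bddAbove
  rintro μ ⟨x, hx, -, hAx⟩
  exact Module.End.hasEigenvalue_of_hasEigenvector
    ⟨Module.End.mem_eigenspace_iff.mpr (by simpa using hAx), hx⟩

lemma inner_toLp_one (x : EuclideanSpace ℝ ι) :
    inner ℝ (WithLp.toLp 2 (1 : ι → ℝ)) x = ∑ v, x v := by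
  simp [PiLp.inner_apply]

/-- A symmetric matrix preserves the orthogonal complement of an eigenvector, and its
restriction there is again symmetric, hence has an eigenvalue. -/
lemma ntEigenvalues_nonempty {A : Matrix ι ι ℝ} (hA : A.IsHermitian) {r : ℝ}
    (hr : A *ᵥ 1 = r • 1) (hn : 1 < Fintype.card ι) : (ntEigenvalues A).Nonempty := by
  set T := toEuclideanLin A
  set one : EuclideanSpace ℝ ι := WithLp.toLp 2 1
  set K := (ℝ ∙ one)ᗮ
  have hT : T.IsSymmetric := isSymmetric_toEuclideanLin_iff.mpr hA
  have hK : ∀ x ∈ K, T x ∈ K := by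
    intro x hx
    have hTone : T one = r • one := by simp [T, one, hr]
    rw [Submodule.mem_orthogonal_singleton_iff_inner_right] at hx ⊢
    rw [← hT, hTone, inner_smul_left, hx, mul_zero]
  have : Nontrivial K := by
    have : Fact (Module.finrank ℝ (EuclideanSpace ℝ ι) = (Fintype.card ι - 1) + 1) :=
      ⟨by rw [finrank_euclideanSpace]; omega⟩
    have hone : one ≠ 0 := by
      intro h
      have := congrArg (fun x : EuclideanSpace ℝ ι => ∑ v, x v) h
      simp [one] at this
      omega
    apply Module.nontrivial_of_finrank_pos (R := ℝ)
    rw [Submodule.finrank_orthogonal_span_singleton (n := Fintype.card ι - 1) hone]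
    omega
  obtain ⟨μ, hμ⟩ : ∃ μ, Module.End.HasEigenvalue (T.restrict hK) μ :=
    ⟨_, (hT.restrict_invariant hK).hasEigenvalue_iSup_of_finiteDimensional⟩
  obtain ⟨v, hv⟩ := hμ.exists_hasEigenvector
  refine ⟨μ, (v : EuclideanSpace ℝ ι).ofLp, ?_, ?_, ?_⟩
  · exact fun h => hv.2 (by simpa using h)
  · rw [← inner_toLp_one]
    exact Submodule.mem_orthogonal_singleton_iff_inner_right.mp v.2
  · have := congrArg (fun w : K => (w : EuclideanSpace ℝ ι).ofLp)
      (Module.End.mem_eigenspace_iff.mp hv.1)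
    simpa [T] using this

end NontrivialSpectrum

section Covering

variable {V W : Type*} [Fintype V] [Fintype W]

noncomputable def relMat (R : V → V → Prop) : Matrix V V ℝ :=
  fun u v => if R u v then 1 else 0

lemma relMat_mulVec_apply (R : V → V → Prop) (x : V → ℝ) (v : V) :
    (relMat R *ᵥ x) v = ∑ u ∈ univ.filter (R v), x u := by
  simp [relMat, mulVec, dotProduct, Finset.sum_filter]

lemma relMat_mulVec_one (R : V → V → Prop) (v : V) :
    (relMat R *ᵥ 1) v = {u | R v u}.ncard := by
  rw [relMat_mulVec_apply, Set.ncard_eq_toFinset_card']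
  simp

def IsCovering (R : V → V → Prop) (S : W → W → Prop) (π : V → W) : Prop :=
  ∀ v, Set.BijOn π {u | R v u} {w | S (π v) w}

lemma IsCovering.mulVec_comp {R : V → V → Prop} {S : W → W → Prop} {π : V → W}
    (hπ : IsCovering R S π) (x : W → ℝ) :
    relMat R *ᵥ (x ∘ π) = (relMat S *ᵥ x) ∘ π := by
  funext v
  simp only [relMat_mulVec_apply, Function.comp]
  have h := hπ v
  refine Finset.sum_nbij π (fun u hu => ?_) ?_ ?_ fun _ _ => rfl
  · simpa using h.mapsTo (by simpa using hu)
  · simpa using h.injOn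
  · simpa using h.surjOn

lemma IsCovering.ntEigenvalues_subset {R : V → V → Prop} {S : W → W → Prop} {π : V → W}
    [DecidableEq W] (hπ : IsCovering R S π) {k : ℕ} (hk : 0 < k)
    (hfib : ∀ w, #{v | π v = w} = k) :
    ntEigenvalues (relMat S) ⊆ ntEigenvalues (relMat R) := by
  rintro μ ⟨x, hx, hsum, hSx⟩
  refine ⟨x ∘ π, fun h => hx (funext fun w => ?_), ?_, ?_⟩
  · obtain ⟨v, hv⟩ := Finset.card_pos.mp (show 0 < #{v | π v = w} by rw [hfib]; exact hk)
    simpa [(Finset.mem_filter.mp hv).2] using congrFun h v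
  · rw [Function.comp_def, Finset.sum_comp_of_card_fiber hfib, hsum, smul_zero]
  · rw [hπ.mulVec_comp, hSx]
    rfl

end Covering

lemma ncard_Ladj {G : Type*} [DecidableEq G] [Finite G] {tri : Set (Finset G)} {d : ℕ}
    (h3 : ∀ t ∈ tri, #t = 3)
    (hA : ∀ e ∈ edgesOf tri, Set.ncard {t | t ∈ tri ∧ e ⊆ t} = d) {τ : Finset G}
    (hτ : τ ∈ edgesOf tri) : {σ | Ladj tri τ σ}.ncard = 2 * d := by
  have hT := Set.toFinite {t | t ∈ tri ∧ τ ⊆ t}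
  have hL :
      {σ | Ladj tri τ σ} = ↑(hT.toFinset.biUnion fun t => (powersetCard 2 t).erase τ) := by
    ext σ
    rw [Finset.mem_coe, mem_biUnion]
    simp only [Set.Finite.mem_toFinset, mem_erase, mem_powersetCard]
    constructor
    · rintro ⟨-, hσ, hne, t, ht, hτt, hσt⟩
      exact ⟨t, ⟨ht, hτt⟩, Ne.symm hne, hσt, hσ.1⟩
    · rintro ⟨t, ⟨ht, hτt⟩, hne, hσt, hσ⟩
      exact ⟨hτ, ⟨hσ, t, ht, hσt⟩, Ne.symm hne, t, ht, hτt, hσt⟩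
  have hdisj : (hT.toFinset : Set (Finset G)).PairwiseDisjoint
      fun t => (powersetCard 2 t).erase τ := by
    intro t ht t' ht' hne
    simp only [Set.Finite.coe_toFinset] at ht ht'
    refine Finset.disjoint_left.mpr fun σ hσ hσ' => hne ?_
    simp only [mem_erase, mem_powersetCard] at hσ hσ'
    rw [← union_eq_of_card_eq_two ht.2 hσ.2.1 (h3 t ht.1) hτ.1 hσ.2.2 (Ne.symm hσ.1),
      ← union_eq_of_card_eq_two ht'.2 hσ'.2.1 (h3 t' ht'.1) hτ.1 hσ'.2.2 (Ne.symm hσ.1)]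
  have hcard : ∀ t ∈ hT.toFinset, #((powersetCard 2 t).erase τ) = 2 := by
    intro t ht
    rw [Set.Finite.mem_toFinset] at ht
    rw [card_erase_of_mem (mem_powersetCard.mpr ⟨ht.2, hτ.1⟩), card_powersetCard, h3 t ht.1]
    rfl
  rw [hL, Set.ncard_coe_finset, card_biUnion hdisj, sum_congr rfl hcard, sum_const,
    ← Set.ncard_eq_toFinset_card _ hT, hA τ hτ, smul_eq_mul, mul_comm]

section CTS

variable {G : Type*} [Group G] [DecidableEq G] {tri : Set (Finset G)}

def NoInverseEdge (tri : Set (Finset G)) : Prop :=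
  ∀ a b : G, ({a, b} : Finset G) ∈ edgesOf tri → b ≠ a⁻¹

def EdgesCommute (tri : Set (Finset G)) : Prop :=
  ∀ a b : G, ({a, b} : Finset G) ∈ edgesOf tri → a * b = b * a

def EdgesInvClosed (tri : Set (Finset G)) : Prop :=
  ∀ a b : G, ({a, b} : Finset G) ∈ edgesOf tri → ({a⁻¹, b⁻¹} : Finset G) ∈ edgesOf tri

/-- Condition D of the paper. -/
def FreeLike (tri : Set (Finset G)) : Prop :=
  ∀ a b a' b' : G, ({a, b} : Finset G) ∈ edgesOf tri → ({a', b'} : Finset G) ∈ edgesOf tri →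
    (a, b) ≠ (a', b') → a * b⁻¹ = a' * b'⁻¹ → b' = a⁻¹ ∧ a' = b⁻¹

@[simp]
lemma ed_pair (g a b : G) : ed g ({a, b} : Finset G) = {a * g, b * g} := by
  simp [ed]

@[simp]
lemma ed_one (τ : Finset G) : ed 1 τ = τ := by
  simp [ed]

lemma ed_injective (g : G) : Function.Injective (ed g) :=
  Finset.image_injective (mul_left_injective g)

@[simp]
lemma card_ed (g : G) (τ : Finset G) : #(ed g τ) = #τ :=
  Finset.card_image_of_injective _ (mul_left_injective g)

lemma ed_mono (g : G) : Monotone (ed g) :=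
  Finset.image_mono _

lemma ed_inv_pair {a b : G} (hab : a * b = b * a) (g : G) :
    ed (a * b * g) ({a⁻¹, b⁻¹} : Finset G) = ed g {a, b} := by
  have ha : a⁻¹ * (a * b * g) = b * g := by group
  have hb : b⁻¹ * (a * b * g) = a * g := by rw [hab]; group
  rw [ed_pair, ed_pair, ha, hb, Finset.pair_comm]

lemma mul_eq_of_pair_eq {a b a' b' : G} (hab : a * b = b * a)
    (h : ({a, b} : Finset G) = {a', b'}) : a' * b' = a * b := by
  rcases Finset.pair_eq_pair_iff.mp h with ⟨rfl, rfl⟩ | ⟨rfl, rfl⟩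
  · rfl
  · exact hab.symm

lemma mul_mul_ne_self (h0 : NoInverseEdge tri) {a b : G} (hab : ({a, b} : Finset G) ∈ edgesOf tri)
    (g : G) : a * b * g ≠ g := fun h =>
  h0 a b hab (eq_inv_of_mul_eq_one_right (mul_eq_right.mp h))

lemma eq_or_eq_twin_of_mul_eq (hB : EdgesCommute tri) (hD : FreeLike tri) {a b a' b' g g' : G}
    (hab : ({a, b} : Finset G) ∈ edgesOf tri) (hab' : ({a', b'} : Finset G) ∈ edgesOf tri)
    (ha : a' * g' = a * g) (hb : b' * g' = b * g) :
    (g' = g ∧ a' = a ∧ b' = b) ∨ (g' = a * b * g ∧ a' = b⁻¹ ∧ b' = a⁻¹) := by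
  by_cases hpair : (a, b) = (a', b')
  · obtain ⟨rfl, rfl⟩ := Prod.ext_iff.mp hpair
    exact Or.inl ⟨mul_left_cancel ha, rfl, rfl⟩
  · have hquot : a * b⁻¹ = a' * b'⁻¹ := by
      calc a * b⁻¹ = a * g * (b * g)⁻¹ := by group
        _ = a' * b'⁻¹ := by rw [← ha, ← hb]; group
    obtain ⟨rfl, rfl⟩ := hD a b a' b' hab hab' hpair hquot
    refine Or.inr ⟨?_, rfl, rfl⟩
    calc g' = b * (b⁻¹ * g') := by group
      _ = a * b * g := by rw [ha, ← mul_assoc, hB a b hab]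

/-- `(a * b * g, {a⁻¹, b⁻¹})` is the twin of `(g, {a, b})`: its blue neighbour in `G_rep`. -/
lemma eq_or_eq_twin_of_ed_eq (hB : EdgesCommute tri) (hD : FreeLike tri) {a b g g' : G}
    {σ : Finset G} (hab : ({a, b} : Finset G) ∈ edgesOf tri) (hσ : σ ∈ edgesOf tri)
    (h : ed g' σ = ed g {a, b}) :
    (g' = g ∧ σ = {a, b}) ∨ (g' = a * b * g ∧ σ = {a⁻¹, b⁻¹}) := by
  obtain ⟨a', b', -, rfl⟩ := Finset.card_eq_two.mp hσ.1
  rw [ed_pair, ed_pair, Finset.pair_eq_pair_iff] at h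
  rcases h with ⟨ha, hb⟩ | ⟨ha, hb⟩
  · rcases eq_or_eq_twin_of_mul_eq hB hD hab hσ ha hb with
      ⟨rfl, rfl, rfl⟩ | ⟨rfl, rfl, rfl⟩
    · exact Or.inl ⟨rfl, rfl⟩
    · exact Or.inr ⟨rfl, Finset.pair_comm _ _⟩
  · have hba : ({b, a} : Finset G) ∈ edgesOf tri := Finset.pair_comm a b ▸ hab
    rcases eq_or_eq_twin_of_mul_eq hB hD hba hσ ha hb with
      ⟨rfl, rfl, rfl⟩ | ⟨rfl, rfl, rfl⟩
    · exact Or.inl ⟨rfl, Finset.pair_comm _ _⟩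
    · exact Or.inr ⟨by rw [hB a b hab], rfl⟩

lemma pair_eq_of_mul_eq (hB : EdgesCommute tri) {a b u v : G} {t : Finset G} (ht : #t = 3)
    (hab : ({a, b} : Finset G) ∈ edgesOf tri) (huv : ({u, v} : Finset G) ∈ edgesOf tri)
    (habt : {a, b} ⊆ t) (huvt : {u, v} ⊆ t) (hmul : a * b = u * v) :
    ({a, b} : Finset G) = {u, v} := by
  obtain ⟨x, hx⟩ : ({a, b} ∩ {u, v} : Finset G).Nonempty := by
    rw [← Finset.card_pos]
    have := Finset.card_union_add_card_inter ({a, b} : Finset G) {u, v}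
    have := Finset.card_le_card (Finset.union_subset habt huvt)
    rw [hab.1, huv.1] at *
    omega
  have hcab := hB a b hab
  have hcuv := hB u v huv
  simp only [Finset.mem_inter, Finset.mem_insert, Finset.mem_singleton] at hx
  rcases hx with ⟨rfl | rfl, rfl | rfl⟩
  · rw [mul_left_cancel hmul]
  · rw [mul_left_cancel (hmul.trans hcuv), Finset.pair_comm]
  · rw [mul_left_cancel (hcab.symm.trans hmul), Finset.pair_comm]
  · rw [mul_right_cancel hmul]

lemma zigAdj_pair_iff {a b : G} (hab : a * b = b * a) (g : G) (q : G × Finset G) :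
    zigAdj tri (g, {a, b}) q ↔
      (q.1 = g ∧ Ladj tri {a, b} q.2) ∨
        (q.1 = a * b * g ∧ Ladj tri {a⁻¹, b⁻¹} q.2) := by
  have hinv : ({a, b} : Finset G).image (·⁻¹) = {a⁻¹, b⁻¹} := by simp
  simp only [zigAdj, hinv]
  refine or_congr_right ⟨?_, fun ⟨hq, hL⟩ => ⟨a, b, rfl, hq, hL⟩⟩
  rintro ⟨a', b', hpair, hq, hL⟩
  exact ⟨by rw [hq, mul_eq_of_pair_eq hab hpair], hL⟩

lemma zigAdj_snd_mem {p q : G × Finset G} (h : zigAdj tri p q) : q.2 ∈ edgesOf tri := by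
  rcases h with ⟨-, hL⟩ | ⟨-, -, -, -, hL⟩ <;> exact hL.2.1

lemma walkAdj_ed_of_Ladj {τ σ : Finset G} (h : Ladj tri τ σ) (g : G) :
    walkAdj tri (ed g τ) (ed g σ) := by
  obtain ⟨hτ, hσ, hne, t, ht, hτt, hσt⟩ := h
  exact ⟨(ed_injective g).ne hne, by simpa using hτ.1, by simpa using hσ.1, t, ht, g,
    ed_mono g hτt, ed_mono g hσt⟩

lemma mapsTo_ed_zigAdj (hB : EdgesCommute tri) {p : G × Finset G} (hp : p.2 ∈ edgesOf tri) :
    Set.MapsTo (fun q : G × Finset G => ed q.1 q.2)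
      {q | zigAdj tri p q} {e | walkAdj tri (ed p.1 p.2) e} := by
  obtain ⟨g, τ⟩ := p
  obtain ⟨a, b, -, rfl⟩ := Finset.card_eq_two.mp hp.1
  rintro ⟨k, σ⟩ hq
  rcases (zigAdj_pair_iff (hB a b hp) g _).mp hq with ⟨rfl, hL⟩ | ⟨rfl, hL⟩
  · exact walkAdj_ed_of_Ladj hL k
  · change walkAdj tri (ed g {a, b}) (ed (a * b * g) σ)
    rw [← ed_inv_pair (hB a b hp)]
    exact walkAdj_ed_of_Ladj hL _

/-- A red neighbour and a blue neighbour never present the same edge: otherwise the red type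
would be a second type of the same triangle with the same product. -/
lemma ed_ne_ed_mul_of_Ladj (h3 : ∀ t ∈ tri, #t = 3) (h0 : NoInverseEdge tri)
    (hB : EdgesCommute tri) (hD : FreeLike tri) {a b g : G} {σ σ' : Finset G}
    (hab : ({a, b} : Finset G) ∈ edgesOf tri) (hσ : Ladj tri {a, b} σ)
    (hσ' : σ' ∈ edgesOf tri) :
    ed (a * b * g) σ' ≠ ed g σ := by
  obtain ⟨-, hσe, hne, t, ht, habt, hσt⟩ := hσ
  obtain ⟨u, v, -, rfl⟩ := Finset.card_eq_two.mp hσe.1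
  intro h
  rcases eq_or_eq_twin_of_ed_eq hB hD hσe hσ' h with ⟨hg, -⟩ | ⟨hg, -⟩
  · exact mul_mul_ne_self h0 hab g hg
  · exact hne (pair_eq_of_mul_eq hB (h3 t ht) hab hσe habt hσt (mul_right_cancel hg))

lemma injOn_ed_zigAdj (h3 : ∀ t ∈ tri, #t = 3) (h0 : NoInverseEdge tri)
    (hB : EdgesCommute tri) (hD : FreeLike tri) {p : G × Finset G} (hp : p.2 ∈ edgesOf tri) :
    Set.InjOn (fun q : G × Finset G => ed q.1 q.2) {q | zigAdj tri p q} := by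
  obtain ⟨g, τ⟩ := p
  obtain ⟨a, b, -, rfl⟩ := Finset.card_eq_two.mp hp.1
  have hadj := zigAdj_pair_iff (tri := tri) (hB a b hp) g
  rintro ⟨k, σ⟩ hq ⟨k', σ'⟩ hq' (h : ed k σ = ed k' σ')
  rcases (hadj _).mp hq with ⟨rfl, hL⟩ | ⟨rfl, hL⟩ <;>
    rcases (hadj _).mp hq' with ⟨rfl, hL'⟩ | ⟨rfl, hL'⟩
  · rw [ed_injective _ h]
  · exact absurd h.symm (ed_ne_ed_mul_of_Ladj h3 h0 hB hD hp hL hL'.2.1)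
  · exact absurd h (ed_ne_ed_mul_of_Ladj h3 h0 hB hD hp hL' hL.2.1)
  · rw [ed_injective _ h]

lemma surjOn_ed_zigAdj (hB : EdgesCommute tri) (hD : FreeLike tri)
    {p : G × Finset G} (hp : p.2 ∈ edgesOf tri) :
    Set.SurjOn (fun q : G × Finset G => ed q.1 q.2)
      {q | zigAdj tri p q} {e | walkAdj tri (ed p.1 p.2) e} := by
  obtain ⟨g, τ⟩ := p
  obtain ⟨a, b, -, rfl⟩ := Finset.card_eq_two.mp hp.1
  rintro e ⟨hne, -, he, t, ht, h, hsub, hesub⟩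
  obtain ⟨σ₀, hσ₀t, hσ₀⟩ := Finset.subset_image_iff.mp hsub
  obtain ⟨σ, hσt, rfl⟩ := Finset.subset_image_iff.mp hesub
  change ed h σ₀ = ed g {a, b} at hσ₀
  have hσ₀e : σ₀ ∈ edgesOf tri :=
    ⟨by rw [← card_ed h, hσ₀, card_ed]; exact hp.1, t, ht, hσ₀t⟩
  have hL : Ladj tri σ₀ σ := by
    refine ⟨hσ₀e, ⟨(card_ed h σ).symm.trans he, t, ht, hσt⟩, ?_, t, ht, hσ₀t, hσt⟩
    rintro rfl
    exact hne hσ₀.symm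
  refine ⟨(h, σ), (zigAdj_pair_iff (hB a b hp) g _).mpr ?_, rfl⟩
  rcases eq_or_eq_twin_of_ed_eq hB hD hp hσ₀e hσ₀ with ⟨rfl, rfl⟩ | ⟨rfl, rfl⟩
  · exact Or.inl ⟨rfl, hL⟩
  · exact Or.inr ⟨rfl, hL⟩

lemma bijOn_ed_zigAdj (h3 : ∀ t ∈ tri, #t = 3) (h0 : NoInverseEdge tri)
    (hB : EdgesCommute tri) (hD : FreeLike tri) {p : G × Finset G} (hp : p.2 ∈ edgesOf tri) :
    Set.BijOn (fun q : G × Finset G => ed q.1 q.2)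
      {q | zigAdj tri p q} {e | walkAdj tri (ed p.1 p.2) e} :=
  ⟨mapsTo_ed_zigAdj hB hp, injOn_ed_zigAdj h3 h0 hB hD hp, surjOn_ed_zigAdj hB hD hp⟩

lemma walkAdj_comm {e f : Finset G} : walkAdj tri e f ↔ walkAdj tri f e := by
  constructor <;>
  · rintro ⟨hne, he, hf, t, ht, g, het, hft⟩
    exact ⟨hne.symm, hf, he, t, ht, g, hft, het⟩

def edMap (tri : Set (Finset G)) : zigVerts tri → cWalkVerts tri :=
  Subtype.map (fun q => ed q.1 q.2) fun q hq => ⟨q.2, hq, q.1, rfl⟩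

lemma isCovering_edMap (h3 : ∀ t ∈ tri, #t = 3) (h0 : NoInverseEdge tri)
    (hB : EdgesCommute tri) (hD : FreeLike tri) :
    IsCovering (fun p q : zigVerts tri => zigAdj tri p.1 q.1)
      (fun e f : cWalkVerts tri => walkAdj tri e.1 f.1) (edMap tri) := fun p =>
  (bijOn_ed_zigAdj h3 h0 hB hD p.2).subtypeMap _ fun _ => zigAdj_snd_mem

end CTS

section Matrices

variable {G : Type*} [Group G] [DecidableEq G] [Fintype G] {tri : Set (Finset G)}

lemma ncard_zigAdj {d : ℕ} (h3 : ∀ t ∈ tri, #t = 3)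
    (hA : ∀ e ∈ edgesOf tri, Set.ncard {t | t ∈ tri ∧ e ⊆ t} = d) (h0 : NoInverseEdge tri)
    (hB : EdgesCommute tri) (hC : EdgesInvClosed tri) {p : G × Finset G}
    (hp : p.2 ∈ edgesOf tri) : {q | zigAdj tri p q}.ncard = 4 * d := by
  obtain ⟨g, τ⟩ := p
  obtain ⟨a, b, -, rfl⟩ := Finset.card_eq_two.mp hp.1
  have hsplit : {q | zigAdj tri (g, {a, b}) q} =
      Prod.mk g '' {σ | Ladj tri {a, b} σ} ∪
        Prod.mk (a * b * g) '' {σ | Ladj tri {a⁻¹, b⁻¹} σ} := by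
    ext ⟨k, σ⟩
    simp only [Set.mem_ofPred_eq, zigAdj_pair_iff (hB a b hp), Set.mem_union, Set.mem_image,
      Prod.mk.injEq, exists_eq_right_right]
    tauto
  have hdisj : Disjoint (Prod.mk g '' {σ | Ladj tri {a, b} σ})
      (Prod.mk (a * b * g) '' {σ | Ladj tri {a⁻¹, b⁻¹} σ}) := by
    refine Set.disjoint_left.mpr ?_
    rintro _ ⟨σ, -, rfl⟩ ⟨σ', -, h⟩
    exact mul_mul_ne_self h0 hp g (Prod.ext_iff.mp h).1
  rw [hsplit, Set.ncard_union_eq hdisj, Set.ncard_image_of_injective _ (Prod.mk_right_injective _),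
    Set.ncard_image_of_injective _ (Prod.mk_right_injective _), ncard_Ladj h3 hA hp,
    ncard_Ladj h3 hA (hC a b hp)]
  ring

lemma cWalkMat_isHermitian (tri : Set (Finset G)) : (cWalkMat tri).IsHermitian :=
  Matrix.IsHermitian.ext fun _ _ => if_congr walkAdj_comm rfl rfl

lemma one_lt_card_cWalkVerts (h3 : ∀ t ∈ tri, #t = 3) {τ : Finset G}
    (hτ : τ ∈ edgesOf tri) :
    1 < Fintype.card (cWalkVerts tri) := by
  obtain ⟨hτ2, t, ht, hτt⟩ := hτ
  obtain ⟨x, hx⟩ := card_pos.mp (by omega : 0 < #τ)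
  have hσ : t.erase x ∈ edgesOf tri :=
    ⟨by rw [card_erase_of_mem (hτt hx), h3 t ht], t, ht, erase_subset _ _⟩
  refine Fintype.one_lt_card_iff.mpr
    ⟨⟨τ, τ, ⟨hτ2, t, ht, hτt⟩, 1, by simp⟩, ⟨t.erase x, _, hσ, 1, by simp⟩,
      fun h => ?_⟩
  have hτσ : τ = t.erase x := congrArg Subtype.val h
  exact notMem_erase x t (hτσ ▸ hx)

lemma card_fiber_edMap (h0 : NoInverseEdge tri) (hB : EdgesCommute tri)
    (hC : EdgesInvClosed tri) (hD : FreeLike tri) (e : cWalkVerts tri) :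
    #{q | edMap tri q = e} = 2 := by
  obtain ⟨_, τ, hτ, g, rfl⟩ := e
  obtain ⟨a, b, -, rfl⟩ := Finset.card_eq_two.mp hτ.1
  have hfib : ({q | edMap tri q = ⟨ed g {a, b}, {a, b}, hτ, g, rfl⟩} : Finset (zigVerts tri)) =
      {⟨(g, {a, b}), hτ⟩, ⟨(a * b * g, {a⁻¹, b⁻¹}), hC a b hτ⟩} := by
    ext ⟨⟨k, σ⟩, hσ⟩
    simp only [mem_filter, mem_univ, true_and, mem_insert, mem_singleton, edMap, Subtype.map,
      Subtype.mk.injEq, Prod.mk.injEq]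
    refine ⟨eq_or_eq_twin_of_ed_eq hB hD hτ hσ, ?_⟩
    rintro (⟨rfl, rfl⟩ | ⟨rfl, rfl⟩)
    · rfl
    · exact ed_inv_pair (hB a b hτ) g
  rw [hfib, card_pair]
  exact fun h => mul_mul_ne_self h0 hτ g (congrArg (fun q : zigVerts tri => q.1.1) h).symm

lemma cWalkMat_mulVec_one {d : ℕ} (h3 : ∀ t ∈ tri, #t = 3)
    (hA : ∀ e ∈ edgesOf tri, Set.ncard {t | t ∈ tri ∧ e ⊆ t} = d) (h0 : NoInverseEdge tri)
    (hB : EdgesCommute tri) (hC : EdgesInvClosed tri) (hD : FreeLike tri) :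
    cWalkMat tri *ᵥ 1 = (4 * d : ℝ) • 1 := by
  funext e
  obtain ⟨_, τ, hτ, g, rfl⟩ := e
  let p : zigVerts tri := ⟨(g, τ), hτ⟩
  have hdeg : {q : zigVerts tri | zigAdj tri p.1 q.1}.ncard = 4 * d :=
    (Set.ncard_preimage_of_injective_subset_range Subtype.val_injective
      fun q hq => ⟨⟨q, zigAdj_snd_mem hq⟩, rfl⟩).trans (ncard_zigAdj h3 hA h0 hB hC hτ)
  change (relMat _ *ᵥ 1) (edMap tri p) = _
  rw [relMat_mulVec_one, ← (isCovering_edMap h3 h0 hB hD p).ncard_eq]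
  simp [hdeg]

end Matrices

theorem zig_is_lift_of_walk_general {G : Type*} [Group G] [DecidableEq G] [Fintype G]
    (tri : Set (Finset G)) (d : ℕ)
    (h3 : ∀ t ∈ tri, t.card = 3)
    (hA : ∀ e ∈ edgesOf tri, Set.ncard {t | t ∈ tri ∧ e ⊆ t} = d)
    (h0 : ∀ a b : G, ({a, b} : Finset G) ∈ edgesOf tri → b ≠ a⁻¹)
    (hB : ∀ a b : G, ({a, b} : Finset G) ∈ edgesOf tri → a * b = b * a)
    (hC : ∀ a b : G, ({a, b} : Finset G) ∈ edgesOf tri →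
      ({a⁻¹, b⁻¹} : Finset G) ∈ edgesOf tri)
    (hD : ∀ a b a' b' : G, ({a, b} : Finset G) ∈ edgesOf tri →
      ({a', b'} : Finset G) ∈ edgesOf tri → (a, b) ≠ (a', b') →
      a * b⁻¹ = a' * b'⁻¹ → b' = a⁻¹ ∧ a' = b⁻¹) :
    (∀ p : G × Finset G, p.2 ∈ edgesOf tri →
      Set.BijOn (fun q : G × Finset G => ed q.1 q.2)
        {q | zigAdj tri p q} {e | walkAdj tri (ed p.1 p.2) e}) ∧
    ntSup (cWalkMat tri) ≤ ntSup (zigMat tri) := by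
  refine ⟨fun p hp => bijOn_ed_zigAdj h3 h0 hB hD hp, ?_⟩
  change sSup (ntEigenvalues (cWalkMat tri)) ≤ sSup (ntEigenvalues (zigMat tri))
  rcases (edgesOf tri).eq_empty_or_nonempty with hempty | ⟨τ, hτ⟩
  · have : IsEmpty (zigVerts tri) := ⟨fun p => hempty.subset p.2⟩
    have : IsEmpty (cWalkVerts tri) := ⟨fun e => by
      obtain ⟨τ, hτ, -⟩ := e.2
      exact hempty.subset hτ⟩
    rw [ntEigenvalues_of_isEmpty, ntEigenvalues_of_isEmpty]
  · exact csSup_le_csSup (bddAbove_ntEigenvalues _)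
      (ntEigenvalues_nonempty (cWalkMat_isHermitian tri) (cWalkMat_mulVec_one h3 hA h0 hB hC hD)
        (one_lt_card_cWalkVerts h3 hτ))
      ((isCovering_edMap h3 h0 hB hD).ntEigenvalues_subset two_pos
        (card_fiber_edMap h0 hB hC hD))

/-- In a CTS `C = CTS[S,G]`, the graph `G_zig` is a lift of `G_walk(C)`:
`E` maps the `G_zig`-neighborhood of every vertex bijectively onto the
`G_walk`-neighborhood of its image. Consequently `λ(G_walk(C)) ≤ λ(G_zig)`. -/
theorem zig_is_lift_of_walk {G : Type*} [Group G] [DecidableEq G] [Fintype G]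
    (tri : Set (Finset G)) (d : ℕ)
    (h3 : ∀ t ∈ tri, t.card = 3)
    (hA : ∀ e ∈ edgesOf tri, Set.ncard {t | t ∈ tri ∧ e ⊆ t} = d)
    (h0 : ∀ a b : G, ({a, b} : Finset G) ∈ edgesOf tri → b ≠ a⁻¹)
    (hB : ∀ a b : G, ({a, b} : Finset G) ∈ edgesOf tri → a * b = b * a)
    (hC : ∀ a b : G, ({a, b} : Finset G) ∈ edgesOf tri →
      ({a⁻¹, b⁻¹} : Finset G) ∈ edgesOf tri)
    (hD : ∀ a b a' b' : G, ({a, b} : Finset G) ∈ edgesOf tri →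
      ({a', b'} : Finset G) ∈ edgesOf tri → (a, b) ≠ (a', b') →
      a * b⁻¹ = a' * b'⁻¹ → b' = a⁻¹ ∧ a' = b⁻¹)
    (hE : ∀ x y : G, (∃ e ∈ edgesOf tri, x ∈ e) → (∃ e ∈ edgesOf tri, y ∈ e) →
      Relation.ReflTransGen (fun u v : G => ({u, v} : Finset G) ∈ edgesOf tri) x y) :
    (∀ p : G × Finset G, p.2 ∈ edgesOf tri →
      Set.BijOn (fun q : G × Finset G => ed q.1 q.2)
        {q | zigAdj tri p q} {e | walkAdj tri (ed p.1 p.2) e}) ∧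
    ntSup (cWalkMat tri) ≤ ntSup (zigMat tri) :=
  zig_is_lift_of_walk_general tri d h3 hA h0 hB hC hD
end
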